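/- arXiv:0807.2380 — 5 statements merged into one kernel-verified Lean document; each statement's English description precedes it below -/
import Mathlib

section
/- Let v : ℝ^d → ℝ^d be a mapping satisfying |v(x)| ≤ C|x| for all x ∈ ℝ^d and some constant C. Let s ≥ 0. Then for every tempered distribution f on ℝ^d whose Fourier transform is supported in a ball B(η₀, 1) for some η₀ ∈ ℝ^d (and which is given by a continuous function), one has sup_{x ∈ ℝ^d} ⟨x⟩^{−s} |f(v(x))| ≲ ∫_{ℝ^d} ⟨x⟩^{−s} |f(x)| dx, with implicit constant independent of f and η₀. -/
open MeasureTheory FourierTransform Metric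

/-!
A function `f` with `supp 𝓕 f ⊆ B(η₀, 1)` reproduces itself under convolution with the inverse
Fourier transform of `ψ(· - η₀)`, where `ψ` is a Schwartz function equal to `1` on the unit ball.
That kernel is the modulation `e^{2πi⟨η₀, ·⟩} 𝓕⁻ψ`, so its modulus is independent of `η₀` and
decays faster than any power. Hence `|f(z)| ≤ ∫ |𝓕⁻ψ(z - y)| |f(y)| dy`, and Peetre's inequality
`⟨y⟩^s ≲ ⟨z - y⟩^s ⟨z⟩^s` together with `⟨v(x)⟩ ≲ ⟨x⟩` moves the weight `⟨x⟩^{-s}` onto `y`.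
-/

open Real Function SchwartzMap
open scoped RealInnerProductSpace

section Weight

variable {E : Type*} [NormedAddCommGroup E] {s : ℝ}

theorem one_add_norm_add_sq_rpow_le (hs : 0 ≤ s) (a b : E) :
    (1 + ‖a + b‖ ^ 2) ^ (s / 2) ≤
      2 ^ (s / 2) * (1 + ‖a‖ ^ 2) ^ (s / 2) * (1 + ‖b‖ ^ 2) ^ (s / 2) := by
  have hbase : 1 + ‖a + b‖ ^ 2 ≤ 2 * (1 + ‖a‖ ^ 2) * (1 + ‖b‖ ^ 2) := by
    nlinarith [norm_add_le a b, norm_nonneg (a + b), sq_nonneg (‖a‖ - ‖b‖),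
      sq_nonneg (‖a‖ * ‖b‖)]
  calc (1 + ‖a + b‖ ^ 2) ^ (s / 2) ≤ (2 * (1 + ‖a‖ ^ 2) * (1 + ‖b‖ ^ 2)) ^ (s / 2) := by
        gcongr
    _ = _ := by
        rw [mul_rpow (by positivity) (by positivity), mul_rpow (by positivity) (by positivity)]

theorem one_add_norm_sq_rpow_le_of_norm_le (hs : 0 ≤ s) {u x : E} {C : ℝ} (h : ‖u‖ ≤ C * ‖x‖) :
    (1 + ‖u‖ ^ 2) ^ (s / 2) ≤ (1 + C ^ 2) ^ (s / 2) * (1 + ‖x‖ ^ 2) ^ (s / 2) := by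
  have hsq : ‖u‖ ^ 2 ≤ C ^ 2 * ‖x‖ ^ 2 := by
    rw [← mul_pow]
    exact pow_le_pow_left₀ (norm_nonneg u) h 2
  rw [← mul_rpow (by positivity) (by positivity)]
  gcongr
  nlinarith [sq_nonneg C, sq_nonneg ‖x‖]

theorem one_add_norm_sq_rpow_le_one_add_norm_pow_ceil (hs : 0 ≤ s) (x : E) :
    (1 + ‖x‖ ^ 2) ^ (s / 2) ≤ (1 + ‖x‖) ^ ⌈s⌉₊ := calc
  (1 + ‖x‖ ^ 2) ^ (s / 2) = √(1 + ‖x‖ ^ 2) ^ s := rpow_div_two_eq_sqrt _ (by positivity)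
  _ ≤ (1 + ‖x‖) ^ s := by gcongr; exact sqrt_one_add_norm_sq_le x
  _ ≤ (1 + ‖x‖) ^ (⌈s⌉₊ : ℝ) := rpow_le_rpow_of_exponent_le (by simp) (Nat.le_ceil s)
  _ = (1 + ‖x‖) ^ ⌈s⌉₊ := rpow_natCast _ _

theorem one_add_norm_sq_rpow_neg_mul_norm_sub_le {F : Type*} [NormedAddCommGroup F] {K C : ℝ}
    (hs : 0 ≤ s) (hK : 0 ≤ K) {φ : E → F} (hφ : ∀ t, ‖φ t‖ ≤ K * (1 + ‖t‖ ^ 2) ^ (-s / 2))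
    {u x : E} (hu : ‖u‖ ≤ C * ‖x‖) (y : E) :
    (1 + ‖x‖ ^ 2) ^ (-s / 2) * ‖φ (u - y)‖ ≤
      K * 2 ^ (s / 2) * (1 + C ^ 2) ^ (s / 2) * (1 + ‖y‖ ^ 2) ^ (-s / 2) := by
  have hinv (z : E) : (1 + ‖z‖ ^ 2) ^ (-s / 2) = ((1 + ‖z‖ ^ 2) ^ (s / 2))⁻¹ := by
    rw [neg_div, rpow_neg (by positivity)]
  have hpeetre := one_add_norm_add_sq_rpow_le hs (y - u) u
  rw [sub_add_cancel, ← norm_neg (y - u), neg_sub] at hpeetre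
  have hφ' := hφ (u - y)
  rw [hinv] at hφ'
  rw [hinv, hinv]
  calc ((1 + ‖x‖ ^ 2) ^ (s / 2))⁻¹ * ‖φ (u - y)‖
      ≤ ((1 + ‖x‖ ^ 2) ^ (s / 2))⁻¹ * (K * ((1 + ‖u - y‖ ^ 2) ^ (s / 2))⁻¹) := by gcongr
    _ = K / ((1 + ‖x‖ ^ 2) ^ (s / 2) * (1 + ‖u - y‖ ^ 2) ^ (s / 2)) := by field_simp
    _ ≤ K * 2 ^ (s / 2) * (1 + C ^ 2) ^ (s / 2) / (1 + ‖y‖ ^ 2) ^ (s / 2) := by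
      rw [div_le_div_iff₀ (by positivity) (by positivity), mul_assoc K, mul_assoc K]
      gcongr
      grw [hpeetre, one_add_norm_sq_rpow_le_of_norm_le hs hu]
      exact le_of_eq (by ring)
    _ = _ := div_eq_mul_inv _ _

end Weight

theorem SchwartzMap.exists_norm_le_mul_one_add_norm_sq_rpow_neg {E F : Type*}
    [NormedAddCommGroup E] [NormedSpace ℝ E] [NormedAddCommGroup F] [NormedSpace ℝ F]
    (g : 𝓢(E, F)) {s : ℝ} (hs : 0 ≤ s) :
    ∃ K > 0, ∀ x, ‖g x‖ ≤ K * (1 + ‖x‖ ^ 2) ^ (-s / 2) := by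
  set k := ⌈s⌉₊
  refine ⟨2 ^ k * (Finset.Iic (k, 0)).sup (fun m ↦ SchwartzMap.seminorm ℝ m.1 m.2) g + 1,
    by positivity, fun x ↦ ?_⟩
  have hdecay := one_add_le_sup_seminorm_apply (𝕜 := ℝ) (m := (k, 0)) le_rfl le_rfl g x
  rw [norm_iteratedFDeriv_zero] at hdecay
  rw [neg_div, rpow_neg (by positivity), le_mul_inv_iff₀ (by positivity)]
  calc ‖g x‖ * (1 + ‖x‖ ^ 2) ^ (s / 2) ≤ ‖g x‖ * (1 + ‖x‖) ^ k := by
        gcongr; exact one_add_norm_sq_rpow_le_one_add_norm_pow_ceil hs x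
    _ ≤ _ := by linarith

section Fourier

variable {V E : Type*} [NormedAddCommGroup V] [InnerProductSpace ℝ V] [FiniteDimensional ℝ V]

variable (V) in
theorem exists_schwartzMap_eq_one_on_ball : ∃ ψ : 𝓢(V, ℂ), ∀ ω ∈ ball (0 : V) 1, ψ ω = 1 := by
  let b : ContDiffBump (0 : V) := ⟨1, 2, one_pos, one_lt_two⟩
  refine ⟨(b.hasCompactSupport.comp_left (g := Complex.ofRealCLM) (map_zero _)).toSchwartzMap
    (Complex.ofRealCLM.contDiff.comp b.contDiff), fun ω hω ↦ ?_⟩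
  simp [b.one_of_mem_closedBall (ball_subset_closedBall hω)]

variable [MeasurableSpace V] [BorelSpace V] [NormedAddCommGroup E] [NormedSpace ℂ E]

theorem norm_fourierInv_comp_sub_const (g : V → E) (η₀ t : V) :
    ‖𝓕⁻ (fun ω ↦ g (ω - η₀)) t‖ = ‖𝓕⁻ g t‖ := by
  simp_rw [sub_eq_add_neg]
  change ‖VectorFourier.fourierIntegral 𝐞 volume (-innerₗ V) (g ∘ fun ω ↦ ω + -η₀) t‖ = _
  rw [VectorFourier.fourierIntegral_comp_add_right, Circle.norm_smul]
  rfl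

theorem integrable_fourier_of_support_subset_ball {f : V → E} (hf : Integrable f) {η₀ : V}
    {r : ℝ} (hsupp : support (𝓕 f) ⊆ ball η₀ r) : Integrable (𝓕 f) := by
  have hcont : Continuous (𝓕 f) := VectorFourier.fourierIntegral_continuous
    continuous_fourierChar (innerSL ℝ).continuous₂ hf
  exact hcont.integrable_of_hasCompactSupport
    ((isCompact_closedBall η₀ r).closure_of_subset (hsupp.trans ball_subset_closedBall))

variable [CompleteSpace E]

theorem fourierInv_smul_fourier_apply {χ : V → ℂ} {f : V → E} (hχ : Integrable χ)
    (hf : Integrable f) (z : V) :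
    𝓕⁻ (fun ω ↦ χ ω • 𝓕 f ω) z = ∫ y, 𝓕⁻ χ (z - y) • f y := by
  have hint : Integrable (fun p : V × V ↦ 𝐞 ⟪p.1, z - p.2⟫ • χ p.1 • f p.2)
      (volume.prod volume) := by
    refine (hχ.smul_prod hf).mono ?_ (.of_forall fun p ↦ by simp [Circle.norm_smul])
    exact (continuous_fourierChar.comp (by fun_prop)).aestronglyMeasurable.smul
      (hχ.smul_prod hf).aestronglyMeasurable
  calc 𝓕⁻ (fun ω ↦ χ ω • 𝓕 f ω) z = ∫ ω, ∫ y, 𝐞 ⟪ω, z - y⟫ • χ ω • f y := by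
        simp only [fourierInv_eq, fourier_eq, Circle.smul_def, ← integral_smul]
        congr 1 with ω
        congr 1 with y
        rw [inner_sub_right, sub_eq_add_neg, AddChar.map_add_eq_mul, real_inner_comm ω y]
        simp only [Circle.coe_mul, smul_smul]
        ring_nf
    _ = ∫ y, ∫ ω, 𝐞 ⟪ω, z - y⟫ • χ ω • f y := integral_integral_swap hint
    _ = ∫ y, 𝓕⁻ χ (z - y) • f y := by
        simp only [fourierInv_eq]
        congr 1 with y
        rw [← integral_smul_const]
        simp only [Circle.smul_def, smul_smul, smul_eq_mul]

theorem eq_integral_fourierInv_sub_smul_of_support_fourier_subset_ball {ψ : V → ℂ}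
    (hψi : Integrable ψ) (hψ : ∀ ω ∈ ball (0 : V) 1, ψ ω = 1) {f : V → E} {η₀ : V}
    (hfc : Continuous f) (hfi : Integrable f) (hsupp : support (𝓕 f) ⊆ ball η₀ 1) (z : V) :
    f z = ∫ y, 𝓕⁻ (fun ω ↦ ψ (ω - η₀)) (z - y) • f y := by
  have hcutoff : (fun ω ↦ ψ (ω - η₀) • 𝓕 f ω) = 𝓕 f := by
    ext ω
    by_cases hω : 𝓕 f ω = 0
    · simp [hω]
    · rw [hψ _ (by simpa [dist_eq_norm] using hsupp hω), one_smul]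
  rw [← fourierInv_smul_fourier_apply (hψi.comp_sub_right η₀) hfi, hcutoff,
    hfi.fourierInv_fourier_eq (integrable_fourier_of_support_subset_ball hfi hsupp)
      hfc.continuousAt]

theorem norm_le_integral_norm_fourierInv_sub_mul_norm_of_support_fourier_subset_ball
    {ψ : V → ℂ} (hψi : Integrable ψ) (hψ : ∀ ω ∈ ball (0 : V) 1, ψ ω = 1) {f : V → E}
    {η₀ : V} (hfc : Continuous f) (hfi : Integrable f) (hsupp : support (𝓕 f) ⊆ ball η₀ 1)
    (z : V) :
    ‖f z‖ ≤ ∫ y, ‖𝓕⁻ ψ (z - y)‖ * ‖f y‖ := by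
  rw [eq_integral_fourierInv_sub_smul_of_support_fourier_subset_ball hψi hψ hfc hfi hsupp z]
  refine (norm_integral_le_integral_norm _).trans_eq ?_
  simp_rw [norm_smul, norm_fourierInv_comp_sub_const]

end Fourier

theorem generalized_bernstein_general (d : ℕ) (C : ℝ) (s : ℝ) (hs : 0 ≤ s) :
    ∃ c : ℝ, 0 < c ∧
      ∀ v : EuclideanSpace ℝ (Fin d) → EuclideanSpace ℝ (Fin d),
        (∀ x, ‖v x‖ ≤ C * ‖x‖) →
        ∀ (f : EuclideanSpace ℝ (Fin d) → ℂ) (η₀ : EuclideanSpace ℝ (Fin d)),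
          Continuous f → Integrable f →
          Function.support (𝓕 f) ⊆ ball η₀ 1 →
          ∀ x : EuclideanSpace ℝ (Fin d),
            (1 + ‖x‖ ^ 2) ^ (-s / 2) * ‖f (v x)‖ ≤
              c * ∫ y : EuclideanSpace ℝ (Fin d), (1 + ‖y‖ ^ 2) ^ (-s / 2) * ‖f y‖ := by
  obtain ⟨ψ, hψ⟩ := exists_schwartzMap_eq_one_on_ball (EuclideanSpace ℝ (Fin d))
  obtain ⟨K, hK, hdecay⟩ := (𝓕⁻ ψ).exists_norm_le_mul_one_add_norm_sq_rpow_neg hs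
  rw [fourierInv_coe] at hdecay
  refine ⟨K * 2 ^ (s / 2) * (1 + C ^ 2) ^ (s / 2), by positivity,
    fun v hv f η₀ hfc hfi hsupp x ↦ ?_⟩
  have hweighted : Integrable fun y ↦ (1 + ‖y‖ ^ 2) ^ (-s / 2) * ‖f y‖ := by
    refine hfi.norm.bdd_mul (c := 1) ?_ (.of_forall fun y ↦ ?_)
    · exact ((continuous_const.add (continuous_norm.pow 2)).rpow_const
        fun y ↦ Or.inl (by positivity : (0 : ℝ) < 1 + ‖y‖ ^ 2).ne').aestronglyMeasurable
    · rw [norm_of_nonneg (by positivity)]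
      exact rpow_le_one_of_one_le_of_nonpos (by simp) (by linarith)
  calc (1 + ‖x‖ ^ 2) ^ (-s / 2) * ‖f (v x)‖
      ≤ (1 + ‖x‖ ^ 2) ^ (-s / 2) * ∫ y, ‖𝓕⁻ ⇑ψ (v x - y)‖ * ‖f y‖ := by
        gcongr
        exact norm_le_integral_norm_fourierInv_sub_mul_norm_of_support_fourier_subset_ball
          ψ.integrable hψ hfc hfi hsupp (v x)
    _ = ∫ y, (1 + ‖x‖ ^ 2) ^ (-s / 2) * ‖𝓕⁻ ⇑ψ (v x - y)‖ * ‖f y‖ := by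
        rw [← integral_const_mul]
        simp_rw [mul_assoc]
    _ ≤ ∫ y, K * 2 ^ (s / 2) * (1 + C ^ 2) ^ (s / 2) * ((1 + ‖y‖ ^ 2) ^ (-s / 2) * ‖f y‖) :=
        integral_mono_of_nonneg (.of_forall fun y ↦ by positivity) (hweighted.const_mul _)
          (.of_forall fun y ↦ (mul_le_mul_of_nonneg_right
            (one_add_norm_sq_rpow_neg_mul_norm_sub_le hs hK.le hdecay (hv x) y)
            (norm_nonneg _)).trans_eq (mul_assoc _ _ _))
    _ = _ := integral_const_mul _ _

/-- Generalized Bernstein inequality: if `|v(x)| ≤ C|x|`, `s ≥ 0`, and `f` is a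
(continuous, integrable) function whose Fourier transform is supported in a ball
`B(η₀,1)`, then `sup_x ⟨x⟩^{-s} |f(v(x))| ≲ ∫ ⟨x⟩^{-s} |f(x)| dx`, with implicit
constant depending only on `d`, `s`, `C` (in particular independent of `f`, `η₀`). -/
theorem generalized_bernstein (d : ℕ) (hd : 1 ≤ d) (C : ℝ) (hC : 0 < C) (s : ℝ) (hs : 0 ≤ s) :
    ∃ c : ℝ, 0 < c ∧
      ∀ v : EuclideanSpace ℝ (Fin d) → EuclideanSpace ℝ (Fin d),
        (∀ x, ‖v x‖ ≤ C * ‖x‖) →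
        ∀ (f : EuclideanSpace ℝ (Fin d) → ℂ) (η₀ : EuclideanSpace ℝ (Fin d)),
          Continuous f → Integrable f →
          Function.support (𝓕 f) ⊆ ball η₀ 1 →
          ∀ x : EuclideanSpace ℝ (Fin d),
            (1 + ‖x‖ ^ 2) ^ (-s / 2) * ‖f (v x)‖ ≤
              c * ∫ y : EuclideanSpace ℝ (Fin d), (1 + ‖y‖ ^ 2) ^ (-s / 2) * ‖f y‖ :=
  generalized_bernstein_general d C s hs
end

section
/- Let N ≥ 1 be an integer, φ(x) = (1+|x|²)^{−N}, and for R > 0 and x ∈ ℝ^d set φ_{x,R}(v) = φ((v−x)/R). Then there exists a constant C_N > 0 such that sup_{y ∈ B(x,R)} |f(y)| ≤ C_N · μ(B(x,R))^{−1} · ∫_{ℝ^d} φ_{x,R}(v) |f(v)| dv, for every tempered distribution f (given by a continuous function) whose Fourier transform is supported in a ball B(η₀, 1/R) for some η₀ ∈ ℝ^d, where μ denotes Lebesgue measure. -/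
/-!
Let `χ` be a smooth bump equal to one on `B(η₀, 1/R)`. Since `𝓕 f` is supported there,
`𝓕 f = χ · 𝓕 f`, so `f = f ⋆ 𝓕⁻ χ`. The kernel `𝓕⁻ χ` is, up to a unimodular factor,
`R^{-d} ψ(·/R)` for one fixed Schwartz function `ψ`, hence bounded by
`C R^{-d} (1 + |u/R|²)^{-N}`. For `|y - x| < R`, Peetre's inequality moves the centre of this
weight from `y` to `x` at the cost of a factor `4^N`, and `R^d` is `μ(B(x,R))` up to a constant.
-/

open MeasureTheory FourierTransform Metric
open scoped RealInnerProductSpace SchwartzMap Convolution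
open Module ContinuousLinearMap

theorem SchwartzMap.exists_norm_le_mul_one_add_sq_rpow_neg {E F : Type*}
    [NormedAddCommGroup E] [NormedSpace ℝ E] [NormedAddCommGroup F] [NormedSpace ℝ F]
    (ψ : 𝓢(E, F)) (N : ℕ) :
    ∃ C : ℝ, 0 < C ∧ ∀ w : E, ‖ψ w‖ ≤ C * (1 + ‖w‖ ^ 2) ^ (-(N : ℝ)) := by
  set S := 2 ^ (2 * N) * ((Finset.Iic (2 * N, 0)).sup fun m => SchwartzMap.seminorm ℝ m.1 m.2) ψ
  refine ⟨S + 1, by positivity, fun w => ?_⟩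
  have hdecay : (1 + ‖w‖) ^ (2 * N) * ‖ψ w‖ ≤ S := by
    simpa using ψ.one_add_le_sup_seminorm_apply (𝕜 := ℝ) (m := (2 * N, 0)) le_rfl le_rfl w
  have hbracket : (1 + ‖w‖ ^ 2) ^ N ≤ (1 + ‖w‖) ^ (2 * N) := by
    rw [pow_mul]
    gcongr
    nlinarith [norm_nonneg w]
  rw [Real.rpow_neg (by positivity), Real.rpow_natCast, ← div_eq_mul_inv,
    le_div_iff₀ (by positivity)]
  calc ‖ψ w‖ * (1 + ‖w‖ ^ 2) ^ N ≤ (1 + ‖w‖) ^ (2 * N) * ‖ψ w‖ := by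
        rw [mul_comm]; gcongr
    _ ≤ S + 1 := by linarith

/-- Peetre's inequality for the weight `(1 + t²)^(-N)`. -/
theorem one_add_sq_rpow_neg_le {a c : ℝ} (ha : 0 ≤ a) (h : a ≤ c + 1) (N : ℕ) :
    (1 + c ^ 2) ^ (-(N : ℝ)) ≤ 4 ^ N * (1 + a ^ 2) ^ (-(N : ℝ)) := by
  have hkey : 1 + a ^ 2 ≤ (1 + c ^ 2) * 4 := by nlinarith [sq_nonneg (c - 1)]
  rw [Real.rpow_neg (by positivity), Real.rpow_neg (by positivity), Real.rpow_natCast,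
    Real.rpow_natCast, ← div_eq_mul_inv, le_div_iff₀ (by positivity),
    inv_mul_le_iff₀ (by positivity), ← mul_pow]
  gcongr

section Fourier

variable {E F : Type*} [NormedAddCommGroup E] [InnerProductSpace ℝ E] [FiniteDimensional ℝ E]
  [MeasurableSpace E] [BorelSpace E] [NormedAddCommGroup F] [NormedSpace ℂ F]

theorem Real.fourierInv_comp_sub_apply (χ : E → F) (η u : E) :
    𝓕⁻ (fun ξ => χ (ξ - η)) u = 𝐞 ⟪η, u⟫ • 𝓕⁻ χ u := by
  simp only [Real.fourierInv_eq, Circle.smul_def]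
  rw [← integral_add_right_eq_self _ η, ← integral_smul]
  congr 1
  ext ξ
  rw [add_sub_cancel_right, inner_add_left, AddChar.map_add_eq_mul, Circle.coe_mul, mul_smul,
    smul_comm]

theorem Real.fourierInv_comp_smul_apply (χ : E → F) {R : ℝ} (hR : R ≠ 0) (u : E) :
    𝓕⁻ (fun ξ => χ (R • ξ)) u = (|R| ^ finrank ℝ E)⁻¹ • 𝓕⁻ χ (R⁻¹ • u) := by
  simp only [Real.fourierInv_eq]
  have hrescale : ∀ ξ : E, 𝐞 ⟪ξ, u⟫ • χ (R • ξ) = 𝐞 ⟪R • ξ, R⁻¹ • u⟫ • χ (R • ξ) := by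
    intro ξ
    rw [real_inner_smul_left, real_inner_smul_right, mul_inv_cancel_left₀ hR]
  simp_rw [hrescale]
  rw [Measure.integral_comp_smul volume (fun v => 𝐞 ⟪v, R⁻¹ • u⟫ • χ v) R, abs_inv, abs_pow]

theorem eq_convolution_fourierInv_of_eq_one_on_support {f : E → ℂ} (hfc : Continuous f)
    (hfi : Integrable f) (χ : 𝓢(E, ℂ)) (hχ : ∀ ξ ∈ Function.support (𝓕 f), χ ξ = 1) :
    f = f ⋆[mul ℂ ℂ] ⇑(𝓕⁻ χ : 𝓢(E, ℂ)) := by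
  set K : 𝓢(E, ℂ) := 𝓕⁻ χ
  have hK : 𝓕 ⇑K = ⇑χ := by rw [← SchwartzMap.fourier_coe, fourier_fourierInv_eq]
  have hcut : ∀ ξ, 𝓕 f ξ * χ ξ = 𝓕 f ξ := by
    intro ξ
    by_cases h : 𝓕 f ξ = 0
    · rw [h, zero_mul]
    · rw [hχ ξ h, mul_one]
  have hFconv : 𝓕 (f ⋆[mul ℂ ℂ] ⇑K) = 𝓕 f := by
    ext ξ
    rw [Real.fourier_mul_convolution_eq hfi K.integrable, hK, hcut]
  have hFint : Integrable (𝓕 f) := by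
    have hFcont : Continuous (𝓕 f) :=
      VectorFourier.fourierIntegral_continuous Real.continuous_fourierChar
        (by exact continuous_inner) hfi
    have hFbdd : ∀ ξ, ‖𝓕 f ξ‖ ≤ ∫ v, ‖f v‖ :=
      VectorFourier.norm_fourierIntegral_le_integral_norm _ _ _ _
    exact (χ.integrable.bdd_mul hFcont.aestronglyMeasurable (ae_of_all _ hFbdd)).congr
      (ae_of_all _ hcut)
  have hKbdd : BddAbove (Set.range fun u => ‖K u‖) :=
    ⟨_, Set.forall_mem_range.2 (K.norm_le_seminorm ℝ)⟩
  have hconv_cont : Continuous (f ⋆[mul ℂ ℂ] ⇑K) :=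
    BddAbove.continuous_convolution_right_of_integrable (mul ℂ ℂ) hKbdd hfi K.continuous
  have hconv_int : Integrable (f ⋆[mul ℂ ℂ] ⇑K) := hfi.integrable_convolution _ K.integrable
  calc f = 𝓕⁻ (𝓕 f) := (hfc.fourierInv_fourier_eq hfi hFint).symm
    _ = 𝓕⁻ (𝓕 (f ⋆[mul ℂ ℂ] ⇑K)) := by rw [hFconv]
    _ = f ⋆[mul ℂ ℂ] ⇑K := hconv_cont.fourierInv_fourier_eq hconv_int (hFconv ▸ hFint)

end Fourier

namespace ContDiffBump

variable {E : Type*} [NormedAddCommGroup E] [InnerProductSpace ℝ E] [FiniteDimensional ℝ E]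

noncomputable def toComplexSchwartzMap {c : E} (b : ContDiffBump c) : 𝓢(E, ℂ) :=
  HasCompactSupport.toSchwartzMap (f := fun x => (b x : ℂ))
    (b.hasCompactSupport.comp_left Complex.ofReal_zero)
    (Complex.ofRealCLM.contDiff.comp b.contDiff)

@[simp]
theorem toComplexSchwartzMap_apply {c : E} (b : ContDiffBump c) (x : E) :
    b.toComplexSchwartzMap x = b x := rfl

noncomputable def rescale (b : ContDiffBump (0 : E)) (c : E) {R : ℝ} (hR : 0 < R) :
    ContDiffBump c :=
  ⟨b.rIn / R, b.rOut / R, div_pos b.rIn_pos hR, div_lt_div_of_pos_right b.rIn_lt_rOut hR⟩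

theorem rescale_apply (b : ContDiffBump (0 : E)) (c : E) {R : ℝ} (hR : 0 < R) (ξ : E) :
    b.rescale c hR ξ = b (R • (ξ - c)) := by
  simp only [ContDiffBump.apply, rescale, sub_zero, smul_smul, div_div_div_cancel_right₀ hR.ne']
  congr 2
  field_simp

variable [MeasurableSpace E] [BorelSpace E]

theorem norm_fourierInv_rescale_apply (b : ContDiffBump (0 : E)) (c : E) {R : ℝ} (hR : 0 < R)
    (u : E) :
    ‖(𝓕⁻ (b.rescale c hR).toComplexSchwartzMap : 𝓢(E, ℂ)) u‖ =
      (R ^ finrank ℝ E)⁻¹ * ‖(𝓕⁻ b.toComplexSchwartzMap : 𝓢(E, ℂ)) (R⁻¹ • u)‖ := by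
  have hcomp : ⇑(b.rescale c hR).toComplexSchwartzMap =
      fun ξ => b.toComplexSchwartzMap (R • (ξ - c)) := by
    ext ξ
    simp [rescale_apply]
  rw [SchwartzMap.fourierInv_coe, SchwartzMap.fourierInv_coe, hcomp,
    Real.fourierInv_comp_sub_apply (fun ζ => b.toComplexSchwartzMap (R • ζ)),
    Real.fourierInv_comp_smul_apply _ hR.ne', Circle.smul_def,
    norm_smul, Circle.norm_coe, one_mul, norm_smul, norm_inv, norm_pow, Real.norm_eq_abs,
    abs_abs, abs_of_pos hR]

end ContDiffBump

theorem norm_le_integral_of_eq_convolution {E : Type*} [NormedAddCommGroup E] [NormedSpace ℝ E]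
    [MeasurableSpace E] [OpensMeasurableSpace E] {μ : Measure E} {f K : E → ℂ} {x y : E}
    {R A : ℝ} (N : ℕ) (hR : 0 < R) (hy : y ∈ ball x R) (hfi : Integrable f μ)
    (hK : ∀ u, ‖K u‖ ≤ A * (1 + ‖R⁻¹ • u‖ ^ 2) ^ (-(N : ℝ)))
    (hrep : f y = (f ⋆[mul ℂ ℂ, μ] K) y) :
    ‖f y‖ ≤ 4 ^ N * A * ∫ v, (1 + ‖R⁻¹ • (v - x)‖ ^ 2) ^ (-(N : ℝ)) * ‖f v‖ ∂μ := by
  set w : E → ℝ := fun v => (1 + ‖R⁻¹ • (v - x)‖ ^ 2) ^ (-(N : ℝ))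
  have hA : 0 ≤ A := by simpa using (norm_nonneg _).trans (hK 0)
  have hw_int : Integrable (fun v => w v * ‖f v‖) μ := by
    have hw_cont : Continuous w :=
      (by fun_prop : Continuous fun v => 1 + ‖R⁻¹ • (v - x)‖ ^ 2).rpow_const
        fun v => Or.inl (by positivity)
    refine hfi.norm.bdd_mul (c := 1) hw_cont.aestronglyMeasurable (ae_of_all _ fun v => ?_)
    rw [Real.norm_of_nonneg (by positivity)]
    exact Real.rpow_le_one_of_one_le_of_nonpos (by linarith [sq_nonneg ‖R⁻¹ • (v - x)‖])
      (by simp)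
  have hyx : ‖R⁻¹ • (y - x)‖ ≤ 1 := by
    rw [norm_smul, Real.norm_of_nonneg (inv_nonneg.2 hR.le), ← dist_eq_norm,
      inv_mul_le_iff₀ hR, mul_one]
    exact (mem_ball.1 hy).le
  have hpoint : ∀ v, ‖f v * K (y - v)‖ ≤ 4 ^ N * A * (w v * ‖f v‖) := by
    intro v
    have hshift : ‖R⁻¹ • (v - x)‖ ≤ ‖R⁻¹ • (y - v)‖ + 1 :=
      calc ‖R⁻¹ • (v - x)‖ = ‖R⁻¹ • (y - x) - R⁻¹ • (y - v)‖ := by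
            rw [← smul_sub, sub_sub_sub_cancel_left]
        _ ≤ ‖R⁻¹ • (y - x)‖ + ‖R⁻¹ • (y - v)‖ := norm_sub_le _ _
        _ ≤ ‖R⁻¹ • (y - v)‖ + 1 := by linarith
    calc ‖f v * K (y - v)‖ = ‖f v‖ * ‖K (y - v)‖ := norm_mul _ _
      _ ≤ ‖f v‖ * (A * (4 ^ N * w v)) := by
          gcongr
          exact (hK _).trans (by gcongr; exact one_add_sq_rpow_neg_le (norm_nonneg _) hshift N)
      _ = 4 ^ N * A * (w v * ‖f v‖) := by ring
  calc ‖f y‖ = ‖∫ v, f v * K (y - v) ∂μ‖ := by rw [hrep, convolution_mul]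
    _ ≤ ∫ v, ‖f v * K (y - v)‖ ∂μ := norm_integral_le_integral_norm _
    _ ≤ ∫ v, 4 ^ N * A * (w v * ‖f v‖) ∂μ :=
        integral_mono_of_nonneg (ae_of_all _ fun _ => norm_nonneg _) (hw_int.const_mul _)
          (ae_of_all _ hpoint)
    _ = 4 ^ N * A * ∫ v, w v * ‖f v‖ ∂μ := integral_const_mul _ _

theorem localized_bernstein_general (d : ℕ) (N : ℕ) :
    ∃ C : ℝ, 0 < C ∧
      ∀ (R : ℝ), 0 < R →
      ∀ (x : EuclideanSpace ℝ (Fin d)) (f : EuclideanSpace ℝ (Fin d) → ℂ)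
        (η₀ : EuclideanSpace ℝ (Fin d)),
        Continuous f → Integrable f →
        Function.support (𝓕 f) ⊆ ball η₀ (1 / R) →
        ∀ y ∈ ball x R,
          ‖f y‖ ≤ C * ((volume (ball x R)).toReal)⁻¹ *
            ∫ v : EuclideanSpace ℝ (Fin d),
              (1 + ‖R⁻¹ • (v - x)‖ ^ 2) ^ (-(N : ℝ)) * ‖f v‖ := by
  let b : ContDiffBump (0 : EuclideanSpace ℝ (Fin d)) := ⟨1, 2, one_pos, one_lt_two⟩
  obtain ⟨Cψ, hCψ, hψ⟩ :=
    (𝓕⁻ b.toComplexSchwartzMap : 𝓢(_, ℂ)).exists_norm_le_mul_one_add_sq_rpow_neg N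
  set B := (volume (ball (0 : EuclideanSpace ℝ (Fin d)) 1)).toReal
  have hB : 0 < B :=
    ENNReal.toReal_pos (measure_ball_pos volume 0 one_pos).ne' measure_ball_lt_top.ne
  refine ⟨4 ^ N * Cψ * B, by positivity, fun R hR x f η₀ hfc hfi hsupp y hy => ?_⟩
  set χ := (b.rescale η₀ hR).toComplexSchwartzMap
  have hχ : ∀ ξ ∈ Function.support (𝓕 f), χ ξ = 1 := fun ξ hξ => by
    simp [χ, (b.rescale η₀ hR).one_of_mem_closedBall (ball_subset_closedBall (hsupp hξ))]
  have hK : ∀ u, ‖(𝓕⁻ χ : 𝓢(_, ℂ)) u‖ ≤ (R ^ d)⁻¹ * Cψ * (1 + ‖R⁻¹ • u‖ ^ 2) ^ (-(N : ℝ)) := by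
    intro u
    rw [b.norm_fourierInv_rescale_apply, finrank_euclideanSpace_fin, mul_assoc]
    gcongr
    exact hψ _
  have hvol : (volume (ball x R)).toReal = R ^ d * B := by
    rw [Measure.addHaar_ball_of_pos volume x hR, ENNReal.toReal_mul,
      ENNReal.toReal_ofReal (by positivity), finrank_euclideanSpace_fin]
  calc ‖f y‖ ≤ 4 ^ N * ((R ^ d)⁻¹ * Cψ) *
        ∫ v, (1 + ‖R⁻¹ • (v - x)‖ ^ 2) ^ (-(N : ℝ)) * ‖f v‖ :=
        norm_le_integral_of_eq_convolution N hR hy hfi hK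
          (congrFun (eq_convolution_fourierInv_of_eq_one_on_support hfc hfi χ hχ) y)
    _ = _ := by rw [hvol]; field_simp

/-- Localized Bernstein inequality: for `φ(x) = (1+|x|²)^{-N}` and
`φ_{x,R}(v) = φ((v-x)/R)`, there is `C_N > 0` such that
`sup_{y ∈ B(x,R)} |f(y)| ≤ C_N μ(B(x,R))^{-1} ∫ φ_{x,R}(v) |f(v)| dv`
for every (continuous, integrable) `f` with `𝓕 f` supported in a ball of radius `1/R`. -/
theorem localized_bernstein (d : ℕ) (hd : 1 ≤ d) (N : ℕ) (hN : 1 ≤ N) :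
    ∃ C : ℝ, 0 < C ∧
      ∀ (R : ℝ), 0 < R →
      ∀ (x : EuclideanSpace ℝ (Fin d)) (f : EuclideanSpace ℝ (Fin d) → ℂ)
        (η₀ : EuclideanSpace ℝ (Fin d)),
        Continuous f → Integrable f →
        Function.support (𝓕 f) ⊆ ball η₀ (1 / R) →
        ∀ y ∈ ball x R,
          ‖f y‖ ≤ C * ((volume (ball x R)).toReal)⁻¹ *
            ∫ v : EuclideanSpace ℝ (Fin d),
              (1 + ‖R⁻¹ • (v - x)‖ ^ 2) ^ (-(N : ℝ)) * ‖f v‖ :=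
  localized_bernstein_general d N
end

section
/- Let a₁, a₂ ∈ ℝ and C₀ > 0 with 0 < a₁ ≤ C₀ and C₀^{−1} ≤ |a₂| ≤ C₀, and let s ∈ ℝ. Then for all x ∈ ℝ^d, ∫_{ℝ^d} e^{−a₁|η + a₂x|²} ⟨η⟩^s dη ≳ ⟨x⟩^s, where the implicit constant depends only on d, C₀ and s. -/
/-!
On the unit ball around `-a₂ • x` the Gaussian factor is at least `exp (-C₀)`, and there
`⟨η⟩ ^ s` is comparable to `⟨a₂ x⟩ ^ s` by Peetre's inequality, hence to `⟨x⟩ ^ s` since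
`C₀⁻¹ ≤ |a₂| ≤ C₀`. The integral therefore dominates `⟨x⟩ ^ s` times the volume of a unit ball,
which does not depend on the centre.
-/

open MeasureTheory Metric Real

theorem rpow_le_rpow_abs_mul_rpow_of_le_mul {u v M : ℝ} (hu : 0 < u) (hv : 0 < v)
    (huv : u ≤ M * v) (hvu : v ≤ M * u) (r : ℝ) : u ^ r ≤ M ^ |r| * v ^ r := by
  have hM : 0 < M := pos_of_mul_pos_left (hu.trans_le huv) hv.le
  rcases le_or_gt 0 r with hr | hr
  · rw [abs_of_nonneg hr, ← mul_rpow hM.le hv.le]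
    exact rpow_le_rpow hu.le huv hr
  · rw [abs_of_neg hr, rpow_neg hM.le, ← div_eq_inv_mul, le_div_iff₀ (rpow_pos_of_pos hM _),
      ← mul_rpow hu.le hM.le, mul_comm u]
    exact rpow_le_rpow_of_nonpos hv hvu hr.le

section Peetre

variable {E : Type*} [SeminormedAddCommGroup E]

theorem one_add_norm_add_sq_le (x y : E) :
    1 + ‖x + y‖ ^ 2 ≤ 2 * (1 + ‖x‖ ^ 2) * (1 + ‖y‖ ^ 2) := by
  have := norm_add_le x y
  nlinarith [norm_nonneg (x + y), sq_nonneg (‖x‖ - ‖y‖), sq_nonneg (‖x‖ * ‖y‖)]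

/-- Peetre's inequality. -/
theorem one_add_norm_add_sq_rpow_le_s5 (x y : E) (r : ℝ) :
    (1 + ‖x + y‖ ^ 2) ^ r ≤ (2 * (1 + ‖x‖ ^ 2)) ^ |r| * (1 + ‖y‖ ^ 2) ^ r := by
  refine rpow_le_rpow_abs_mul_rpow_of_le_mul (by positivity) (by positivity)
    (by simpa only [mul_assoc] using one_add_norm_add_sq_le x y) ?_ r
  simpa [norm_neg, mul_assoc, mul_comm (1 + ‖x + y‖ ^ 2)] using one_add_norm_add_sq_le (-x) (x + y)

theorem one_add_norm_sq_rpow_le_of_norm_add_le_one {x y : E} (h : ‖x + y‖ ≤ 1) (r : ℝ) :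
    (1 + ‖y‖ ^ 2) ^ r ≤ 4 ^ |r| * (1 + ‖x‖ ^ 2) ^ r := by
  calc (1 + ‖y‖ ^ 2) ^ r = (1 + ‖(x + y) + -x‖ ^ 2) ^ r := by rw [add_neg_cancel_comm]
    _ ≤ (2 * (1 + ‖x + y‖ ^ 2)) ^ |r| * (1 + ‖-x‖ ^ 2) ^ r := one_add_norm_add_sq_rpow_le_s5 _ _ r
    _ ≤ 4 ^ |r| * (1 + ‖x‖ ^ 2) ^ r := by
      rw [norm_neg]
      gcongr
      nlinarith [norm_nonneg (x + y)]

end Peetre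

theorem one_add_norm_sq_rpow_le_smul {E : Type*} [SeminormedAddCommGroup E] [NormedSpace ℝ E]
    {C a : ℝ} (hC : 0 < C) (ha₁ : C⁻¹ ≤ |a|) (ha₂ : |a| ≤ C) (x : E) (r : ℝ) :
    (1 + ‖x‖ ^ 2) ^ r ≤ (1 + C ^ 2) ^ |r| * (1 + ‖a • x‖ ^ 2) ^ r := by
  have hCa : 1 ≤ C * |a| := by rwa [← inv_mul_le_iff₀ hC, mul_one]
  rw [norm_smul, Real.norm_eq_abs, mul_pow]
  refine rpow_le_rpow_abs_mul_rpow_of_le_mul (by positivity) (by positivity) ?_ ?_ r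
  · nlinarith [sq_nonneg ‖x‖, sq_nonneg C, abs_nonneg a, mul_self_le_mul_self zero_le_one hCa]
  · nlinarith [sq_nonneg ‖x‖, sq_nonneg C, mul_self_le_mul_self (abs_nonneg a) ha₂]

theorem rpow_le_div_rpow_mul_exp {y b r : ℝ} (hy : 0 ≤ y) (hb : 0 < b) (hr : 0 ≤ r) :
    y ^ r ≤ (r / b) ^ r * exp (b * y) := by
  rcases hr.eq_or_lt with rfl | hr
  · simpa using one_le_exp (by positivity)
  have hy' : y ≤ r / b * exp (b * y / r) := by
    calc y = r / b * (b * y / r) := by field_simp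
      _ ≤ r / b * exp (b * y / r) := by
        gcongr
        linarith [add_one_le_exp (b * y / r)]
  calc y ^ r ≤ (r / b * exp (b * y / r)) ^ r := rpow_le_rpow hy hy' hr.le
    _ = (r / b) ^ r * exp (b * y) := by
      rw [mul_rpow (by positivity) (exp_pos _).le, ← exp_mul, div_mul_cancel₀ _ hr.ne']

section Integrability

variable {V : Type*} [NormedAddCommGroup V] [InnerProductSpace ℝ V] [FiniteDimensional ℝ V]
  [MeasurableSpace V] [BorelSpace V]

theorem integrable_exp_neg_mul_sq_norm {b : ℝ} (hb : 0 < b) :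
    Integrable fun v : V ↦ exp (-b * ‖v‖ ^ 2) :=
  .of_integral_ne_zero <| by rw [GaussianFourier.integral_rexp_neg_mul_sq_norm hb]; positivity

theorem integrable_exp_neg_mul_sq_norm_mul_rpow {b : ℝ} (hb : 0 < b) (r : ℝ) :
    Integrable fun v : V ↦ exp (-b * ‖v‖ ^ 2) * (1 + ‖v‖ ^ 2) ^ r := by
  refine ((integrable_exp_neg_mul_sq_norm (half_pos hb)).const_mul
    ((2 * |r| / b) ^ |r| * exp (b / 2))).mono' (by fun_prop) (.of_forall fun v ↦ ?_)
  have hweight : (1 + ‖v‖ ^ 2) ^ r ≤ (2 * |r| / b) ^ |r| * exp (b / 2 * (1 + ‖v‖ ^ 2)) :=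
    calc (1 + ‖v‖ ^ 2) ^ r ≤ (1 + ‖v‖ ^ 2) ^ |r| :=
          rpow_le_rpow_of_exponent_le (by simp) (le_abs_self r)
      _ ≤ (|r| / (b / 2)) ^ |r| * exp (b / 2 * (1 + ‖v‖ ^ 2)) :=
          rpow_le_div_rpow_mul_exp (by positivity) (half_pos hb) (abs_nonneg r)
      _ = (2 * |r| / b) ^ |r| * exp (b / 2 * (1 + ‖v‖ ^ 2)) := by ring_nf
  rw [norm_of_nonneg (by positivity)]
  calc exp (-b * ‖v‖ ^ 2) * (1 + ‖v‖ ^ 2) ^ r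
      ≤ exp (-b * ‖v‖ ^ 2) * ((2 * |r| / b) ^ |r| * exp (b / 2 * (1 + ‖v‖ ^ 2))) := by gcongr
    _ = (2 * |r| / b) ^ |r| * exp (b / 2) * exp (-(b / 2) * ‖v‖ ^ 2) := by
      rw [mul_left_comm, ← exp_add, mul_assoc, ← exp_add]
      ring_nf

theorem integrable_exp_neg_mul_sq_norm_add_mul_rpow {b : ℝ} (hb : 0 < b) (w : V) (r : ℝ) :
    Integrable fun v : V ↦ exp (-b * ‖v + w‖ ^ 2) * (1 + ‖v‖ ^ 2) ^ r := by
  refine (((integrable_exp_neg_mul_sq_norm_mul_rpow hb r).comp_add_right w).const_mul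
    ((2 * (1 + ‖w‖ ^ 2)) ^ |r|)).mono' (by fun_prop) (.of_forall fun v ↦ ?_)
  have hpeetre := one_add_norm_add_sq_rpow_le_s5 (-w) (v + w) r
  rw [show -w + (v + w) = v by abel, norm_neg] at hpeetre
  rw [norm_of_nonneg (by positivity), mul_left_comm]
  gcongr

end Integrability

theorem mul_measureReal_le_integral {α : Type*} [MeasurableSpace α] {μ : Measure α} {f : α → ℝ}
    {s : Set α} {m : ℝ} (hf : Integrable f μ) (hf₀ : 0 ≤ f) (hs : MeasurableSet s)
    (hμs : μ s ≠ ⊤) (hm : ∀ x ∈ s, m ≤ f x) : m * μ.real s ≤ ∫ x, f x ∂μ :=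
  calc m * μ.real s = μ.real s • m := mul_comm _ _
    _ ≤ ∫ x in s, f x ∂μ := setIntegral_ge_of_const_le hs hμs hm hf.integrableOn
    _ ≤ ∫ x, f x ∂μ := setIntegral_le_integral hf (.of_forall hf₀)

theorem le_exp_neg_mul_sq_norm_add_mul_rpow {E : Type*} [SeminormedAddCommGroup E]
    [NormedSpace ℝ E] {C a₁ a₂ : ℝ} (hC : 0 < C) (ha₁ : a₁ ≤ C) (ha₂l : C⁻¹ ≤ |a₂|)
    (ha₂u : |a₂| ≤ C) {x η : E} (hη : ‖η + a₂ • x‖ ≤ 1) (r : ℝ) :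
    exp (-C) / (4 * (1 + C ^ 2)) ^ |r| * (1 + ‖x‖ ^ 2) ^ r ≤
      exp (-a₁ * ‖η + a₂ • x‖ ^ 2) * (1 + ‖η‖ ^ 2) ^ r := by
  have hexp : exp (-C) ≤ exp (-a₁ * ‖η + a₂ • x‖ ^ 2) := by
    gcongr
    nlinarith [norm_nonneg (η + a₂ • x), pow_le_one₀ (norm_nonneg _) hη (n := 2)]
  have hweight : (1 + ‖x‖ ^ 2) ^ r ≤ (4 * (1 + C ^ 2)) ^ |r| * (1 + ‖η‖ ^ 2) ^ r :=
    calc (1 + ‖x‖ ^ 2) ^ r ≤ (1 + C ^ 2) ^ |r| * (1 + ‖a₂ • x‖ ^ 2) ^ r :=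
          one_add_norm_sq_rpow_le_smul hC ha₂l ha₂u x r
      _ ≤ (1 + C ^ 2) ^ |r| * (4 ^ |r| * (1 + ‖η‖ ^ 2) ^ r) := by
          gcongr
          exact one_add_norm_sq_rpow_le_of_norm_add_le_one hη r
      _ = (4 * (1 + C ^ 2)) ^ |r| * (1 + ‖η‖ ^ 2) ^ r := by
          rw [← mul_assoc, ← mul_rpow (by positivity) (by norm_num), mul_comm (1 + C ^ 2)]
  calc exp (-C) / (4 * (1 + C ^ 2)) ^ |r| * (1 + ‖x‖ ^ 2) ^ r ≤ exp (-C) * (1 + ‖η‖ ^ 2) ^ r := by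
        rw [div_mul_eq_mul_div, div_le_iff₀' (by positivity), mul_left_comm]
        gcongr
    _ ≤ exp (-a₁ * ‖η + a₂ • x‖ ^ 2) * (1 + ‖η‖ ^ 2) ^ r := by gcongr

theorem gaussian_weight_lower_bound_general (d : ℕ) (C₀ s : ℝ) (hC₀ : 0 < C₀) :
    ∃ c : ℝ, 0 < c ∧
      ∀ (a₁ a₂ : ℝ) (x : EuclideanSpace ℝ (Fin d)),
        0 < a₁ → a₁ ≤ C₀ → C₀⁻¹ ≤ |a₂| → |a₂| ≤ C₀ →
        c * (1 + ‖x‖ ^ 2) ^ (s / 2) ≤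
          ∫ η : EuclideanSpace ℝ (Fin d),
            Real.exp (-a₁ * ‖η + a₂ • x‖ ^ 2) * (1 + ‖η‖ ^ 2) ^ (s / 2) := by
  have hball : 0 < volume.real (closedBall (0 : EuclideanSpace ℝ (Fin d)) 1) :=
    ENNReal.toReal_pos (measure_closedBall_pos _ _ one_pos).ne' measure_closedBall_lt_top.ne
  refine ⟨exp (-C₀) / (4 * (1 + C₀ ^ 2)) ^ |s / 2| *
    volume.real (closedBall (0 : EuclideanSpace ℝ (Fin d)) 1), by positivity,
    fun a₁ a₂ x ha₁ ha₁C ha₂l ha₂u ↦ ?_⟩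
  calc _ = exp (-C₀) / (4 * (1 + C₀ ^ 2)) ^ |s / 2| * (1 + ‖x‖ ^ 2) ^ (s / 2) *
        volume.real (closedBall (-(a₂ • x)) 1) := by
        rw [Measure.addHaar_real_closedBall_center volume (-(a₂ • x))]
        ring
    _ ≤ _ := mul_measureReal_le_integral
        (integrable_exp_neg_mul_sq_norm_add_mul_rpow ha₁ _ _) (fun η ↦ by positivity)
        measurableSet_closedBall measure_closedBall_lt_top.ne fun η hη ↦
          le_exp_neg_mul_sq_norm_add_mul_rpow hC₀ ha₁C ha₂l ha₂u
            (by rwa [mem_closedBall, dist_eq_norm, sub_neg_eq_add] at hη) _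

/-- If `0 < a₁ ≤ C₀` and `C₀⁻¹ ≤ |a₂| ≤ C₀`, then
`∫ e^{-a₁|η+a₂x|²} ⟨η⟩^s dη ≳ ⟨x⟩^s`, with implicit constant depending only on
`d`, `C₀`, `s`. -/
theorem gaussian_weight_lower_bound (d : ℕ) (hd : 1 ≤ d) (C₀ s : ℝ) (hC₀ : 0 < C₀) :
    ∃ c : ℝ, 0 < c ∧
      ∀ (a₁ a₂ : ℝ) (x : EuclideanSpace ℝ (Fin d)),
        0 < a₁ → a₁ ≤ C₀ → C₀⁻¹ ≤ |a₂| → |a₂| ≤ C₀ →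
        c * (1 + ‖x‖ ^ 2) ^ (s / 2) ≤
          ∫ η : EuclideanSpace ℝ (Fin d),
            Real.exp (-a₁ * ‖η + a₂ • x‖ ^ 2) * (1 + ‖η‖ ^ 2) ^ (s / 2) :=
  gaussian_weight_lower_bound_general d C₀ s hC₀
end

section
/- Let a, b ∈ ℝ with a > 0, G_{a+ib}(x) = (a+ib)^{−d/2} e^{−π|x|²/(a+ib)}, g(y) = e^{−π|y|²}, and 1 ≤ q < ∞. Then ‖𝓕(G_{a+ib} · T_x g)‖_{L^q} = ((a+1)²+b²)^{(d/2)(1/q − 1/2)} · q^{−d/(2q)} · (a(a+1)+b²)^{−d/(2q)} · e^{−πa|x|²/(a(a+1)+b²)} for every x ∈ ℝ^d. -/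
/-!
Write `c = a + ib`. Expanding `‖y - x‖²`, the product of the two Gaussians is
`c^{-d/2} e^{-π‖x‖²} e^{-B‖y‖² + 2π⟪x, y⟫}` with `B = π(1 + c)/c`, `Re B > 0`, so its Fourier
transform is a Gaussian integral with the complex linear term `2π⟪x, y⟫ - 2πi⟪w, y⟫`; since this
involves two independent vectors, it is computed coordinatewise. Completing the square in the
real part of the resulting exponent shows that the modulus of the transform is a real Gaussian in
the frequency `w`, `((a+1)²+b²)^{-d/4} e^{-πa‖x‖²/P} e^{-(πP/D)‖w - (b/P)x‖²}` with
`P = a(a+1)+b²`, `D = (a+1)²+b²`, whose `L^q` norm follows from translation invariance and the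
real Gaussian integral.
-/

open MeasureTheory FourierTransform Complex
open scoped Real ENNReal RealInnerProductSpace

theorem integral_cexp_neg_mul_sq_norm_add_two_inner_of_euclideanSpace {ι : Type*} [Fintype ι]
    {B : ℂ} (hB : 0 < B.re) (c₁ c₂ : ℂ) (u₁ u₂ : EuclideanSpace ℝ ι) :
    ∫ v : EuclideanSpace ℝ ι, cexp (-B * ‖v‖ ^ 2 + (c₁ * ⟪u₁, v⟫ + c₂ * ⟪u₂, v⟫)) =
      (π / B) ^ (Fintype.card ι / 2 : ℂ) *
        cexp ((c₁ ^ 2 * ‖u₁‖ ^ 2 + 2 * c₁ * c₂ * ⟪u₁, u₂⟫ + c₂ ^ 2 * ‖u₂‖ ^ 2) / (4 * B)) := by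
  have norm_sq_eq_sum (v : EuclideanSpace ℝ ι) : (‖v‖ : ℂ) ^ 2 = ∑ i, (v i : ℂ) ^ 2 := by
    exact_mod_cast EuclideanSpace.real_norm_sq_eq v
  have inner_eq_sum (u v : EuclideanSpace ℝ ι) : ((⟪u, v⟫ : ℝ) : ℂ) = ∑ i, (u i : ℂ) * v i := by
    simp [PiLp.inner_apply, mul_comm]
  rw [← (PiLp.volume_preserving_toLp ι).integral_comp
    (MeasurableEquiv.toLp 2 _).measurableEmbedding]
  convert! GaussianFourier.integral_cexp_neg_mul_sum_add hB (fun i ↦ c₁ * u₁ i + c₂ * u₂ i)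
    using 5 with _ v
  · rw [norm_sq_eq_sum]
  · simp only [inner_eq_sum, Finset.mul_sum, ← Finset.sum_add_distrib]
    exact Finset.sum_congr rfl fun i _ ↦ by ring
  · simp only [norm_sq_eq_sum, inner_eq_sum, Finset.mul_sum, ← Finset.sum_add_distrib]
    exact Finset.sum_congr rfl fun i _ ↦ by ring

section InnerProductSpace

variable {V : Type*} [NormedAddCommGroup V] [InnerProductSpace ℝ V] [FiniteDimensional ℝ V]
  [MeasurableSpace V] [BorelSpace V]

theorem integral_cexp_neg_mul_sq_norm_add_two_inner {B : ℂ} (hB : 0 < B.re) (c₁ c₂ : ℂ)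
    (u₁ u₂ : V) :
    ∫ v : V, cexp (-B * ‖v‖ ^ 2 + (c₁ * ⟪u₁, v⟫ + c₂ * ⟪u₂, v⟫)) =
      (π / B) ^ (Module.finrank ℝ V / 2 : ℂ) *
        cexp ((c₁ ^ 2 * ‖u₁‖ ^ 2 + 2 * c₁ * c₂ * ⟪u₁, u₂⟫ + c₂ ^ 2 * ‖u₂‖ ^ 2) / (4 * B)) := by
  let e := (stdOrthonormalBasis ℝ V).repr.symm
  rw [← e.measurePreserving.integral_comp e.toHomeomorph.measurableEmbedding]
  convert! integral_cexp_neg_mul_sq_norm_add_two_inner_of_euclideanSpace hB c₁ c₂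
    (e.symm u₁) (e.symm u₂) <;> simp [LinearIsometryEquiv.inner_map_eq_flip]

theorem fourier_cexp_neg_mul_sq_norm_add_inner {B : ℂ} (hB : 0 < B.re) (c : ℂ) (u w : V) :
    𝓕 (fun v ↦ cexp (-B * ‖v‖ ^ 2 + c * ⟪u, v⟫)) w =
      (π / B) ^ (Module.finrank ℝ V / 2 : ℂ) *
        cexp ((c ^ 2 * ‖u‖ ^ 2 - 4 * π * I * c * ⟪u, w⟫ - 4 * π ^ 2 * ‖w‖ ^ 2) / (4 * B)) := by
  simp only [Real.fourier_eq', smul_eq_mul, ← Complex.exp_add]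
  convert! integral_cexp_neg_mul_sq_norm_add_two_inner hB c (-2 * π * I) u w using 3 with v
  · congr 1; push_cast [real_inner_comm w]; ring
  · rw [show (-2 * π * I) ^ 2 = -4 * (π : ℂ) ^ 2 by rw [mul_pow, I_sq]; ring]; ring

theorem fourier_const_mul (k : ℂ) (f : V → ℂ) (w : V) :
    𝓕 (fun v ↦ k * f v) w = k * 𝓕 f w :=
  congrFun (VectorFourier.fourierIntegral_const_smul _ _ _ f k) w

-- For principal branches `c ^ (-n/2) * (c / (1 + c)) ^ (n/2)` need not be `(1 + c) ^ (-n/2)`;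
-- only their moduli agree.
theorem fourier_gaussian_mul_translate_gaussian {c : ℂ} (hc : 0 < c.re) (x w : V) :
    𝓕 (fun y : V ↦ c ^ (-(Module.finrank ℝ V : ℂ) / 2) * cexp (-(π : ℂ) * (‖y‖ ^ 2 : ℝ) / c) *
        cexp (-(π : ℂ) * (‖y - x‖ ^ 2 : ℝ))) w =
      c ^ (-(Module.finrank ℝ V : ℂ) / 2) * (c / (1 + c)) ^ (Module.finrank ℝ V / 2 : ℂ) *
        cexp (-π * (‖x‖ ^ 2 + 2 * I * c * ⟪x, w⟫ + c * ‖w‖ ^ 2) / (1 + c)) := by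
  have hc0 : c ≠ 0 := fun h ↦ by simp [h] at hc
  have hc1 : 1 + c ≠ 0 := fun h ↦ by
    have := congrArg re h; simp at this; linarith
  have hB : 0 < (π * (1 + c) / c).re := by
    rw [show (π : ℂ) * (1 + c) / c = π * (c⁻¹ + 1) by field_simp]
    simp only [re_ofReal_mul, add_re, inv_re, one_re]
    have := normSq_pos.2 hc0
    positivity
  have hsplit : (fun y : V ↦ c ^ (-(Module.finrank ℝ V : ℂ) / 2) *
      cexp (-(π : ℂ) * (‖y‖ ^ 2 : ℝ) / c) * cexp (-(π : ℂ) * (‖y - x‖ ^ 2 : ℝ))) =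
      fun y ↦ c ^ (-(Module.finrank ℝ V : ℂ) / 2) * cexp (-π * ‖x‖ ^ 2) *
        cexp (-(π * (1 + c) / c) * ‖y‖ ^ 2 + 2 * π * ⟪x, y⟫) := by
    funext y
    rw [mul_assoc, mul_assoc, ← Complex.exp_add, ← Complex.exp_add, norm_sub_sq_real]
    congr 2
    push_cast [real_inner_comm x]
    field_simp
    ring
  rw [hsplit, fourier_const_mul, fourier_cexp_neg_mul_sq_norm_add_inner hB,
    show (π : ℂ) / (π * (1 + c) / c) = c / (1 + c) by field_simp, mul_assoc,
    mul_left_comm (cexp _), ← Complex.exp_add, ← mul_assoc]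
  congr 2
  field_simp
  ring

theorem norm_fourier_gaussian_mul_translate_gaussian {a : ℝ} (ha : 0 < a) (b : ℝ) (x w : V) :
    ‖𝓕 (fun y : V ↦ ((a : ℂ) + b * I) ^ (-(Module.finrank ℝ V : ℂ) / 2) *
        cexp (-(π : ℂ) * (‖y‖ ^ 2 : ℝ) / ((a : ℂ) + b * I)) *
        cexp (-(π : ℂ) * (‖y - x‖ ^ 2 : ℝ))) w‖ =
      ((a + 1) ^ 2 + b ^ 2) ^ (-(Module.finrank ℝ V : ℝ) / 4) *
        rexp (-π * a * ‖x‖ ^ 2 / (a * (a + 1) + b ^ 2)) *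
        rexp (-(π * (a * (a + 1) + b ^ 2) / ((a + 1) ^ 2 + b ^ 2)) *
          ‖w - (b / (a * (a + 1) + b ^ 2)) • x‖ ^ 2) := by
  set c : ℂ := a + b * I
  rw [fourier_gaussian_mul_translate_gaussian (by simpa [c] using ha), norm_mul, norm_mul,
    norm_exp]
  set n := Module.finrank ℝ V
  have hc0 : c ≠ 0 := fun h ↦ by have := congrArg re h; simp [c] at this; linarith
  have hnorm_c1 : ‖1 + c‖ ^ 2 = (a + 1) ^ 2 + b ^ 2 := by
    rw [← normSq_eq_norm_sq, normSq_apply]; simp [c]; ring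
  have hprefactor : ‖c ^ (-(n : ℂ) / 2)‖ * ‖(c / (1 + c)) ^ (n / 2 : ℂ)‖ =
      ((a + 1) ^ 2 + b ^ 2) ^ (-(n : ℝ) / 4) := by
    rw [show -(n : ℂ) / 2 = ((-(n : ℝ) / 2 : ℝ) : ℂ) by push_cast; ring,
      show (n / 2 : ℂ) = ((n / 2 : ℝ) : ℂ) by push_cast; ring, norm_cpow_real, norm_cpow_real,
      norm_div, Real.div_rpow (norm_nonneg _) (norm_nonneg _), ← hnorm_c1,
      ← Real.rpow_natCast_mul (norm_nonneg _), Nat.cast_ofNat,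
      show (2 : ℝ) * (-n / 4) = -(n / 2) by ring, neg_div, Real.rpow_neg (norm_nonneg _),
      Real.rpow_neg (norm_nonneg _)]
    have : 0 < ‖c‖ ^ ((n : ℝ) / 2) := by have := norm_pos_iff.2 hc0; positivity
    field_simp
  have hexponent : (-π * (‖x‖ ^ 2 + 2 * I * c * ⟪x, w⟫ + c * ‖w‖ ^ 2) / (1 + c)).re =
      -π * a * ‖x‖ ^ 2 / (a * (a + 1) + b ^ 2) +
        -(π * (a * (a + 1) + b ^ 2) / ((a + 1) ^ 2 + b ^ 2)) *
          ‖w - (b / (a * (a + 1) + b ^ 2)) • x‖ ^ 2 := by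
    rw [norm_sub_sq_real, norm_smul, inner_smul_right, real_inner_comm w x, mul_pow,
      Real.norm_eq_abs, sq_abs]
    simp [c, div_re, normSq_apply, ← ofReal_pow]
    field_simp
    ring
  rw [hprefactor, hexponent, Real.exp_add, ← mul_assoc]

theorem eLpNorm_eq_of_norm_eq_gaussian {E : Type*} [NormedAddCommGroup E] {f : V → E} {K α q : ℝ}
    (hK : 0 ≤ K) (hα : 0 < α) (hq : 0 < q) (z : V)
    (hf : ∀ w, ‖f w‖ = K * rexp (-α * ‖w - z‖ ^ 2)) :
    eLpNorm f (ENNReal.ofReal q) volume =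
      ENNReal.ofReal (K * (π / (q * α)) ^ ((Module.finrank ℝ V : ℝ) / (2 * q))) := by
  have hf_pow (w : V) :
      ‖f w‖ₑ ^ q = ENNReal.ofReal (K ^ q * rexp (-(q * α) * ‖w - z‖ ^ 2)) := by
    rw [← ofReal_norm, ENNReal.ofReal_rpow_of_nonneg (norm_nonneg _) hq.le, hf,
      Real.mul_rpow hK (Real.exp_nonneg _), ← Real.exp_mul]
    ring_nf
  have hgauss : ∫ w : V, rexp (-(q * α) * ‖w - z‖ ^ 2) =
      (π / (q * α)) ^ (Module.finrank ℝ V / 2 : ℝ) := by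
    rw [integral_sub_right_eq_self (fun w ↦ rexp (-(q * α) * ‖w‖ ^ 2)) z,
      GaussianFourier.integral_rexp_neg_mul_sq_norm (by positivity)]
  have hint : Integrable fun w : V ↦ rexp (-(q * α) * ‖w - z‖ ^ 2) :=
    .of_integral_ne_zero (by rw [hgauss]; positivity)
  rw [eLpNorm_eq_lintegral_rpow_enorm_toReal (by simpa using hq) ENNReal.ofReal_ne_top,
    ENNReal.toReal_ofReal hq.le, lintegral_congr fun w ↦ hf_pow w,
    ← ofReal_integral_eq_lintegral_ofReal (hint.const_mul _) (.of_forall fun w ↦ by positivity),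
    integral_const_mul, hgauss, ENNReal.ofReal_rpow_of_nonneg (by positivity) (by positivity),
    Real.mul_rpow (by positivity) (by positivity), ← Real.rpow_mul hK,
    ← Real.rpow_mul (by positivity), mul_one_div_cancel hq.ne', Real.rpow_one]
  ring_nf

end InnerProductSpace

/-- For `G_{a+ib}(x) = (a+ib)^{-d/2} e^{-π|x|²/(a+ib)}`, `g(y)=e^{-π|y|²}`, `a > 0`
and `1 ≤ q < ∞`,
`‖𝓕(G_{a+ib} T_x g)‖_{L^q} = ((a+1)²+b²)^{(d/2)(1/q-1/2)} q^{-d/(2q)}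
  (a(a+1)+b²)^{-d/(2q)} e^{-πa|x|²/(a(a+1)+b²)}`. -/
theorem gaussian_stft_Lq_norm (d : ℕ) (a b : ℝ) (ha : 0 < a) (q : ℝ) (hq : 1 ≤ q)
    (x : EuclideanSpace ℝ (Fin d)) :
    eLpNorm
        (𝓕 (fun y : EuclideanSpace ℝ (Fin d) =>
            ((a : ℂ) + b * I) ^ (-(d : ℂ) / 2) *
              Complex.exp (-(π : ℂ) * (‖y‖ ^ 2 : ℝ) / ((a : ℂ) + b * I)) *
              Complex.exp (-(π : ℂ) * (‖y - x‖ ^ 2 : ℝ))))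
        (ENNReal.ofReal q) volume =
      ENNReal.ofReal
        (((a + 1) ^ 2 + b ^ 2) ^ ((d : ℝ) / 2 * (1 / q - 1 / 2)) *
          q ^ (-(d : ℝ) / (2 * q)) *
          (a * (a + 1) + b ^ 2) ^ (-(d : ℝ) / (2 * q)) *
          Real.exp (-π * a * ‖x‖ ^ 2 / (a * (a + 1) + b ^ 2))) := by
  have hq0 : 0 < q := by linarith
  have hD : 0 < (a + 1) ^ 2 + b ^ 2 := by positivity
  have hP : 0 < a * (a + 1) + b ^ 2 := by positivity
  rw [show (d : ℂ) = Module.finrank ℝ (EuclideanSpace ℝ (Fin d)) by simp,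
    eLpNorm_eq_of_norm_eq_gaussian (by positivity) (by positivity) hq0 _
      (norm_fourier_gaussian_mul_translate_gaussian ha b x), finrank_euclideanSpace_fin,
    show π / (q * (π * (a * (a + 1) + b ^ 2) / ((a + 1) ^ 2 + b ^ 2))) =
      ((a + 1) ^ 2 + b ^ 2) / (q * (a * (a + 1) + b ^ 2)) by field_simp,
    Real.div_rpow hD.le (by positivity), Real.mul_rpow hq0.le hP.le]
  congr 1
  rw [show (d : ℝ) / 2 * (1 / q - 1 / 2) = -d / 4 + d / (2 * q) by field_simp; ring,
    Real.rpow_add hD, neg_div (2 * q) (d : ℝ), Real.rpow_neg hq0.le, Real.rpow_neg hP.le]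
  field_simp
end

section
/- Suppose Φ : ℝ^{2d} → ℝ is smooth, all partial derivatives of order ≥ 2 are bounded, and |det(∂²Φ/∂x_i∂η_l)(x,η)| ≥ δ > 0 for all (x,η). Then for each fixed η ∈ ℝ^d, the map x ↦ ∇_η Φ(x,η) is a global diffeomorphism of ℝ^d, and the Jacobian determinant of its inverse is bounded uniformly in (x,η). -/
set_option maxHeartbeats 1000000


open Matrix

noncomputable section

/-- The gradient of `Φ` with respect to the second (frequency) variable. -/
def gradEta (d : ℕ) (Φ : (Fin d → ℝ) × (Fin d → ℝ) → ℝ)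
    (x η : Fin d → ℝ) : Fin d → ℝ :=
  fun l => fderiv ℝ (fun η' => Φ (x, η')) η (Pi.single l 1)

/-- The mixed Hessian matrix `(∂²Φ/∂x_i∂η_l)(x,η)`. -/
def mixedHessian (d : ℕ) (Φ : (Fin d → ℝ) × (Fin d → ℝ) → ℝ)
    (x η : Fin d → ℝ) : Matrix (Fin d) (Fin d) ℝ :=
  Matrix.of fun i l =>
    fderiv ℝ (fun x' => fderiv ℝ (fun η' => Φ (x', η')) η (Pi.single l 1)) x (Pi.single i 1)

section HadamardPrelim


open Set Function Filter

noncomputable section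

variable {E : Type*} [NormedAddCommGroup E] [NormedSpace ℝ E] [CompleteSpace E]

theorem flow_exists (v : E → E) (B : ℝ) (L : NNReal)
    (hB : ∀ x, ‖v x‖ ≤ B) (hL : LipschitzWith L v) (x₀ : E) :
    ∃ f : ℝ → E, f 0 = x₀ ∧ ∀ t ∈ Icc (0:ℝ) 1, HasDerivWithinAt f (v (f t)) (Icc 0 1) t := by
  have hB0 : 0 ≤ B := le_trans (norm_nonneg _) (hB x₀)
  have hpl : IsPicardLindelof (fun _ : ℝ => v) (tmin := 0) (tmax := 1) ⟨0, ⟨le_refl 0, zero_le_one⟩⟩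
      x₀ ⟨B, hB0⟩ 0 ⟨B, hB0⟩ L := by
    apply IsPicardLindelof.of_time_independent
    · exact fun x _ => hB x
    · exact hL.lipschitzOnWith
    · simp
  obtain ⟨f, hf0, hf⟩ := hpl.exists_eq_forall_mem_Icc_hasDerivWithinAt₀
  exact ⟨f, hf0, hf⟩

/-- upgrade derivative within Icc to within Ici for interior-left points -/
theorem hasDerivWithinAt_Ici_of_Icc {f : ℝ → E} {g : E} {t : ℝ} (ht : t ∈ Ico (0:ℝ) 1)
    (h : HasDerivWithinAt f g (Icc 0 1) t) : HasDerivWithinAt f g (Ici t) t := by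
  have hmem : Icc (0:ℝ) 1 ∈ nhdsWithin t (Ici t) := by
    have h1 : Iic (1:ℝ) ∈ nhds t := Iic_mem_nhds ht.2
    have : Ici t ∩ Iic 1 ⊆ Icc 0 1 := fun s hs => ⟨le_trans ht.1 hs.1, hs.2⟩
    exact mem_nhdsWithin_iff_exists_mem_nhds_inter.2 ⟨Iic 1, h1, by
      intro s hs; exact this ⟨hs.2, hs.1⟩⟩
  exact h.mono_of_mem_nhdsWithin hmem

theorem hadamard_core (F : E → E) (DF W : E → (E →L[ℝ] E)) (K L : ℝ) (hL0 : 0 ≤ L)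
    (hF : ContDiff ℝ (⊤ : ℕ∞) F)
    (hDF : ∀ x, HasFDerivAt F (DF x) x)
    (hWDF : ∀ x, ∀ u, (W x) ((DF x) u) = u)
    (hDFW : ∀ x, ∀ u, (DF x) ((W x) u) = u)
    (hK : ∀ x, ‖W x‖ ≤ K)
    (hLip : ∀ x y, ‖W x - W y‖ ≤ L * ‖x - y‖) :
    Function.Bijective F ∧ ∃ Ψ : E → E, ContDiff ℝ (⊤ : ℕ∞) Ψ ∧
      Function.LeftInverse Ψ F ∧ Function.RightInverse Ψ F := by
  have hK0 : 0 ≤ K := le_trans (norm_nonneg _) (hK 0)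
  -- the vector field for target y
  set v : E → E → E := fun y x => (W x) (y - F 0) with hv
  have hvB : ∀ y x, ‖v y x‖ ≤ K * ‖y - F 0‖ := fun y x =>
    le_trans ((W x).le_opNorm _) (by
      apply mul_le_mul_of_nonneg_right (hK x) (norm_nonneg _))
  have hvLip : ∀ y, LipschitzWith ⟨L * ‖y - F 0‖, by positivity⟩ (v y) := by
    intro y
    apply LipschitzWith.of_dist_le_mul
    intro x x'
    simp only [dist_eq_norm, hv]
    calc ‖(W x) (y - F 0) - (W x') (y - F 0)‖ = ‖(W x - W x') (y - F 0)‖ := by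
          simp [ContinuousLinearMap.sub_apply]
      _ ≤ ‖W x - W x'‖ * ‖y - F 0‖ := (W x - W x').le_opNorm _
      _ ≤ (L * ‖x - x'‖) * ‖y - F 0‖ := by
          apply mul_le_mul_of_nonneg_right (hLip x x') (norm_nonneg _)
      _ = (L * ‖y - F 0‖) * ‖x - x'‖ := by ring
  -- choose flows
  have hflow : ∀ y : E, ∃ f : ℝ → E, f 0 = 0 ∧
      ∀ t ∈ Icc (0:ℝ) 1, HasDerivWithinAt f (v y (f t)) (Icc 0 1) t :=
    fun y => flow_exists (v y) (K * ‖y - F 0‖) _ (hvB y) (hvLip y) 0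
  set flow : E → ℝ → E := fun y => Classical.choose (hflow y) with hflowdef
  have hflow0 : ∀ y, flow y 0 = 0 := fun y => (Classical.choose_spec (hflow y)).1
  have hflow' : ∀ y, ∀ t ∈ Icc (0:ℝ) 1,
      HasDerivWithinAt (flow y) (v y (flow y t)) (Icc 0 1) t :=
    fun y => (Classical.choose_spec (hflow y)).2
  have hflowCont : ∀ y, ContinuousOn (flow y) (Icc 0 1) :=
    fun y t ht => (hflow' y t ht).continuousWithinAt
  -- F along the flow
  have hFflow : ∀ y, ∀ t ∈ Icc (0:ℝ) 1, F (flow y t) = F 0 + t • (y - F 0) := by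
    intro y
    have key : ∀ t ∈ Icc (0:ℝ) 1,
        (fun s => F (flow y s) - s • (y - F 0)) t = (fun s => F (flow y s) - s • (y - F 0)) 0 := by
      apply constant_of_has_deriv_right_zero
      · apply ContinuousOn.sub
        · exact hF.continuous.comp_continuousOn (hflowCont y)
        · exact (continuous_id.smul continuous_const).continuousOn
      · intro t ht
        have h1 : HasDerivWithinAt (fun s => F (flow y s)) (y - F 0) (Ici t) t := by
          have := (hDF (flow y t)).comp_hasDerivWithinAt t
            (hasDerivWithinAt_Ici_of_Icc ht (hflow' y t (mem_Icc_of_Ico ht)))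
          simpa [hDFW, hv, Function.comp_def] using this
        have h2 : HasDerivWithinAt (fun s : ℝ => s • (y - F 0)) (y - F 0) (Ici t) t := by
          simpa using (hasDerivAt_id t).smul_const (y - F 0) |>.hasDerivWithinAt
        simpa [Pi.sub_def] using h1.sub h2
    intro t ht
    have := key t ht
    simp only [zero_smul, sub_zero, hflow0] at this
    exact eq_add_of_sub_eq this
  -- the candidate inverse
  set Ψ : E → E := fun y => flow y 1 with hΨdef
  have hFΨ : ∀ y, F (Ψ y) = y := by
    intro y
    have := hFflow y 1 ⟨zero_le_one, le_refl 1⟩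
    simpa using this
  -- flows as one-sided-derivative solutions
  have hflow'' : ∀ y, ∀ t ∈ Ico (0:ℝ) 1,
      HasDerivWithinAt (flow y) (v y (flow y t)) (Ici t) t :=
    fun y t ht => hasDerivWithinAt_Ici_of_Icc ht (hflow' y t (mem_Icc_of_Ico ht))
  -- continuity of Ψ via Gronwall
  have hΨdist : ∀ y₀ y' : E,
      dist (Ψ y₀) (Ψ y') ≤ gronwallBound 0 (L * ‖y₀ - F 0‖) (0 + K * dist y₀ y') 1 := by
    intro y₀ y'
    have key := dist_le_of_approx_trajectories_ODE (v := fun _ : ℝ => v y₀)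
      (K := ⟨L * ‖y₀ - F 0‖, by positivity⟩)
      (f := flow y₀) (g := flow y') (f' := fun t => v y₀ (flow y₀ t))
      (g' := fun t => v y' (flow y' t)) (a := 0) (b := 1) (εf := 0) (εg := K * dist y₀ y')
      (δ := 0)
      (fun _ => hvLip y₀) (hflowCont y₀) (hflow'' y₀)
      (fun t ht => by simp)
      (hflowCont y') (hflow'' y')
      (fun t ht => by
        have : v y' (flow y' t) - v y₀ (flow y' t) = (W (flow y' t)) (y' - y₀) := by
          simp only [hv]
          rw [← map_sub]
          congr 1
          abel
        rw [dist_eq_norm, this]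
        calc ‖(W (flow y' t)) (y' - y₀)‖ ≤ ‖W (flow y' t)‖ * ‖y' - y₀‖ :=
              (W (flow y' t)).le_opNorm _
          _ ≤ K * ‖y' - y₀‖ := mul_le_mul_of_nonneg_right (hK _) (norm_nonneg _)
          _ = K * dist y₀ y' := by rw [dist_eq_norm, norm_sub_rev])
      (by simp [hflow0])
    have := key 1 ⟨zero_le_one, le_refl 1⟩
    simp only [sub_zero] at this
    exact this
  have hΨcont : Continuous Ψ := by
    rw [continuous_iff_continuousAt]
    intro y₀
    rw [ContinuousAt, tendsto_iff_dist_tendsto_zero]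
    apply squeeze_zero (fun y' => dist_nonneg)
      (fun y' => by simpa [dist_comm] using hΨdist y₀ y')
    have hc : Continuous fun e : ℝ => gronwallBound 0 (L * ‖y₀ - F 0‖) (0 + K * e) 1 := by
      exact (gronwallBound_continuous_ε 0 (L * ‖y₀ - F 0‖) 1).comp
        (by continuity)
    have h0 : Tendsto (fun y' => dist y₀ y') (nhds y₀) (nhds 0) := by
      simpa [dist_comm] using tendsto_iff_dist_tendsto_zero.1 (tendsto_id (x := nhds y₀))
    have := hc.continuousAt.tendsto.comp h0
    simpa [gronwallBound_ε0_δ0, Function.comp_def] using this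
  -- Ψ (F 0) = 0
  have hΨF0 : Ψ (F 0) = 0 := by
    have key := dist_le_of_trajectories_ODE (v := fun _ : ℝ => v (F 0))
      (K := ⟨L * ‖F 0 - F 0‖, by positivity⟩)
      (f := flow (F 0)) (g := fun _ => 0) (a := 0) (b := 1) (δ := 0)
      (fun _ => hvLip (F 0)) (hflowCont (F 0)) (hflow'' (F 0))
      continuousOn_const
      (fun t ht => by
        show HasDerivWithinAt (fun _ : ℝ => (0:E)) (v (F 0) 0) (Ici t) t
        have : v (F 0) 0 = 0 := by simp [hv]
        rw [this]
        exact (hasDerivWithinAt_const t _ (0:E)))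
      (by simp [hflow0])
    have := key 1 ⟨zero_le_one, le_refl 1⟩
    simp [gronwallBound_ε0_δ0] at this
    exact this
  clear hΨdist
  obtain ⟨Ψ', hΨcont', hFΨ', hΨF0'⟩ : ∃ Ψ' : E → E, Continuous Ψ' ∧
      (∀ y, F (Ψ' y) = y) ∧ Ψ' (F 0) = 0 := ⟨Ψ, hΨcont, hFΨ, hΨF0⟩
  clear hΨcont hFΨ hΨF0 hflow0 hflow' hflowCont hFflow hflow'' hΨdef hflowdef
  clear_value Ψ flow
  clear Ψ flow hflow hvB hvLip hv
  clear v
  rename' Ψ' => Ψ, hΨcont' => hΨcont, hFΨ' => hFΨ, hΨF0' => hΨF0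
  -- local structure: strict derivative with invertible derivative
  set e : E → (E ≃L[ℝ] E) := fun a =>
    ContinuousLinearEquiv.equivOfInverse (DF a) (W a) (hWDF a) (hDFW a) with he
  have hecoe : ∀ a, (e a : E →L[ℝ] E) = DF a := by
    intro a
    ext u
    simp [he]
  have hstrict : ∀ a, HasStrictFDerivAt F (e a : E →L[ℝ] E) a := by
    intro a
    apply hF.contDiffAt.hasStrictFDerivAt' (f' := e a)
    · rw [hecoe]; exact hDF a
    · exact (by simp)
  set p : E → OpenPartialHomeomorph E E := fun a => (hstrict a).toOpenPartialHomeomorph F with hp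
  have hpcoe : ∀ a, ⇑(p a) = F := fun a => (hstrict a).toOpenPartialHomeomorph_coe
  have hpsource : ∀ a, a ∈ (p a).source :=
    fun a => (hstrict a).mem_toOpenPartialHomeomorph_source
  -- left inverse via clopen argument
  have hleft : Function.LeftInverse Ψ F := by
    set S : Set E := {x | Ψ (F x) = x} with hS
    have hSclosed : IsClosed S := isClosed_eq (hΨcont.comp hF.continuous) continuous_id
    have hSopen : IsOpen S := by
      rw [isOpen_iff_mem_nhds]
      intro x hx
      have hx' : Ψ (F x) = x := hx
      have h1 : (p x).source ∈ nhds x := (p x).open_source.mem_nhds (hpsource x)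
      have h2 : (fun x' => Ψ (F x')) ⁻¹' (p x).source ∈ nhds x := by
        apply (hΨcont.comp hF.continuous).continuousAt.preimage_mem_nhds
        rw [Function.comp, hx']
        exact h1
      filter_upwards [h1, h2] with x' hx1 hx2
      have : F (Ψ (F x')) = F x' := hFΨ (F x')
      apply (p x).injOn hx2 hx1
      rw [hpcoe]
      exact this
    have hSall : S = univ := by
      have : S.Nonempty := ⟨0, by simpa [hS] using hΨF0⟩
      exact IsClopen.eq_univ ⟨hSclosed, hSopen⟩ this
    intro x
    have : x ∈ S := hSall ▸ mem_univ x
    exact this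
  -- smoothness of Ψ
  have hΨsmooth : ContDiff ℝ (⊤ : ℕ∞) Ψ := by
    rw [contDiff_iff_contDiffAt]
    intro y
    set a := Ψ y with ha
    have hFa : F a = y := hFΨ y
    have hli : ContDiffAt ℝ (⊤ : ℕ∞) ((hstrict a).localInverse F (e a) a) (F a) := by
      have := hF.contDiffAt.to_localInverse (f' := e a)
        (by rw [hecoe]; exact hDF a) (by simp)
      exact this
    rw [hFa] at hli
    apply hli.congr_of_eventuallyEq
    -- Ψ =ᶠ[𝓝 y] localInverse
    rw [(hstrict a).localInverse_def]
    have hFat : F a ∈ (p a).target := by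
      have h := (p a).map_source (hpsource a)
      rwa [hpcoe a] at h
    have htarget : (p a).target ∈ nhds y := by
      rw [← hFa]
      exact (p a).open_target.mem_nhds hFat
    have hsrc : Ψ ⁻¹' (p a).source ∈ nhds y := by
      apply hΨcont.continuousAt.preimage_mem_nhds
      have : Ψ y = a := rfl
      rw [this]
      exact (p a).open_source.mem_nhds (hpsource a)
    filter_upwards [htarget, hsrc] with y' hy1 hy2
    apply (p a).injOn hy2 ((p a).map_target hy1)
    rw [hpcoe]
    rw [hFΨ y']
    have := (p a).right_inv hy1
    rw [hpcoe] at this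
    rw [this]
  refine ⟨⟨hleft.injective, fun y => ⟨Ψ y, hFΨ y⟩⟩, Ψ, hΨsmooth, hleft, hFΨ⟩

end


open Matrix

noncomputable section

/-- determinant bound for matrices with bounded entries -/
theorem det_bound {d : ℕ} (A : Matrix (Fin d) (Fin d) ℝ) (c : ℝ) (hc : 0 ≤ c)
    (h : ∀ i j, |A i j| ≤ c) : |A.det| ≤ (Nat.factorial d) * c ^ d := by
  rw [Matrix.det_apply]
  calc |∑ σ : Equiv.Perm (Fin d), Equiv.Perm.sign σ • ∏ i, A (σ i) i|
      ≤ ∑ σ : Equiv.Perm (Fin d), |Equiv.Perm.sign σ • ∏ i, A (σ i) i| :=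
        Finset.abs_sum_le_sum_abs _ _
    _ ≤ ∑ σ : Equiv.Perm (Fin d), c ^ d := by
        apply Finset.sum_le_sum
        intro σ _
        have habs : |Equiv.Perm.sign σ • ∏ i, A (σ i) i| = |∏ i, A (σ i) i| := by
          rcases Int.units_eq_one_or (Equiv.Perm.sign σ) with hσ | hσ <;> simp [hσ]
        rw [habs]
        calc |∏ i, A (σ i) i| = ∏ i, |A (σ i) i| := by rw [Finset.abs_prod]
          _ ≤ ∏ _i : Fin d, c := Finset.prod_le_prod (fun i _ => abs_nonneg _) (fun i _ => h (σ i) i)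
          _ = c ^ d := by rw [Finset.prod_const, Finset.card_univ, Fintype.card_fin]
    _ = (Nat.factorial d) * c ^ d := by
        rw [Finset.sum_const, Finset.card_univ, Fintype.card_perm, Fintype.card_fin,
          nsmul_eq_mul]

/-- mulVec operator bound -/
theorem mulVec_norm_le {d : ℕ} (A : Matrix (Fin d) (Fin d) ℝ) (c : ℝ) (hc : 0 ≤ c)
    (h : ∀ i j, |A i j| ≤ c) (v : Fin d → ℝ) : ‖A.mulVec v‖ ≤ (d * c) * ‖v‖ := by
  have hd : ∀ i, ‖(A.mulVec v) i‖ ≤ (d * c) * ‖v‖ := by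
    intro i
    show ‖∑ j, A i j * v j‖ ≤ (d:ℝ) * c * ‖v‖
    calc ‖∑ j, A i j * v j‖ ≤ ∑ j, |A i j * v j| := Finset.abs_sum_le_sum_abs _ _
      _ ≤ ∑ _j : Fin d, c * ‖v‖ := by
          apply Finset.sum_le_sum
          intro j _
          rw [abs_mul]
          apply mul_le_mul (h i j) (norm_le_pi_norm v j) (abs_nonneg _)
          exact hc
      _ = d * c * ‖v‖ := by
          rw [Finset.sum_const, Finset.card_univ, Fintype.card_fin, nsmul_eq_mul]
          ring
  exact (pi_norm_le_iff_of_nonneg (x := A.mulVec v) (by positivity)).2 hd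

end

noncomputable section
namespace HadamardAux

variable {d : ℕ} (Φ : (Fin d → ℝ) × (Fin d → ℝ) → ℝ)

/-- second-order derivative map -/
def Hmap : (Fin d → ℝ) × (Fin d → ℝ) → ((Fin d → ℝ) × (Fin d → ℝ)) →L[ℝ]
    (((Fin d → ℝ) × (Fin d → ℝ)) →L[ℝ] ℝ) :=
  fderiv ℝ (fderiv ℝ Φ)

/-- candidate derivative of `x ↦ gradEta Φ x η` -/
def DFat (η x : Fin d → ℝ) : (Fin d → ℝ) →L[ℝ] (Fin d → ℝ) :=
  ContinuousLinearMap.pi fun l =>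
    (ContinuousLinearMap.apply ℝ ℝ ((0, Pi.single l 1) : (Fin d → ℝ) × (Fin d → ℝ))).comp
      ((Hmap Φ (x, η)).comp (ContinuousLinearMap.inl ℝ _ _))

variable {Φ}

lemma inner_fderiv_eq (hΦ : ContDiff ℝ (⊤ : ℕ∞) Φ) (x' η : Fin d → ℝ) (l : Fin d) :
    fderiv ℝ (fun η' => Φ (x', η')) η (Pi.single l 1) =
      fderiv ℝ Φ (x', η) (0, Pi.single l 1) := by
  have h1 : HasFDerivAt (fun η' => Φ (x', η'))
      ((fderiv ℝ Φ (x', η)).comp (ContinuousLinearMap.inr ℝ _ _)) η :=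
    ((hΦ.differentiable (by simp) (x', η)).hasFDerivAt).comp η (hasFDerivAt_prodMk_right x' η)
  rw [h1.fderiv]
  simp

lemma gradEta_eq (hΦ : ContDiff ℝ (⊤ : ℕ∞) Φ) (x η : Fin d → ℝ) :
    gradEta d Φ x η = fun l => fderiv ℝ Φ (x, η) (0, Pi.single l 1) := by
  funext l
  exact inner_fderiv_eq hΦ x η l

lemma hasFDerivAt_inner (hΦ : ContDiff ℝ (⊤ : ℕ∞) Φ) (η x : Fin d → ℝ) (l : Fin d) :
    HasFDerivAt (fun x' => fderiv ℝ Φ (x', η) (0, Pi.single l 1))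
      ((ContinuousLinearMap.apply ℝ ℝ ((0, Pi.single l 1) : (Fin d → ℝ) × (Fin d → ℝ))).comp
        ((Hmap Φ (x, η)).comp (ContinuousLinearMap.inl ℝ _ _))) x := by
  have hGdiff : Differentiable ℝ (fderiv ℝ Φ) :=
    (hΦ.fderiv_right (m := (⊤ : ℕ∞)) (by simp)).differentiable (by simp)
  have h2 : HasFDerivAt (fun x' => fderiv ℝ Φ (x', η))
      ((Hmap Φ (x, η)).comp (ContinuousLinearMap.inl ℝ _ _)) x :=
    ((hGdiff (x, η)).hasFDerivAt).comp x (hasFDerivAt_prodMk_left x η)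
  exact ((ContinuousLinearMap.apply ℝ ℝ
    ((0, Pi.single l 1) : (Fin d → ℝ) × (Fin d → ℝ))).hasFDerivAt).comp x h2

lemma hasFDerivAt_gradEta (hΦ : ContDiff ℝ (⊤ : ℕ∞) Φ) (η x : Fin d → ℝ) :
    HasFDerivAt (fun x' => gradEta d Φ x' η) (DFat Φ η x) x := by
  have key := fun l => hasFDerivAt_inner hΦ η x l
  have h := hasFDerivAt_pi.2 key
  have heq : (fun x' => fun l => fderiv ℝ Φ (x', η) (0, Pi.single l 1)) =
      (fun x' => gradEta d Φ x' η) := by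
    funext x'
    exact (gradEta_eq hΦ x' η).symm
  rw [← heq]
  exact h

lemma DFat_apply (η x v : Fin d → ℝ) (l : Fin d) :
    DFat Φ η x v l = Hmap Φ (x, η) (v, 0) (0, Pi.single l 1) := by
  simp [DFat]

lemma mixedHessian_eq (hΦ : ContDiff ℝ (⊤ : ℕ∞) Φ) (x η : Fin d → ℝ) (i l : Fin d) :
    mixedHessian d Φ x η i l = DFat Φ η x (Pi.single i 1) l := by
  show fderiv ℝ (fun x' => fderiv ℝ (fun η' => Φ (x', η')) η (Pi.single l 1)) x (Pi.single i 1)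
    = _
  have hinner : (fun x' => fderiv ℝ (fun η' => Φ (x', η')) η (Pi.single l 1)) =
      fun x' => fderiv ℝ Φ (x', η) (0, Pi.single l 1) := by
    funext x'
    exact inner_fderiv_eq hΦ x' η l
  rw [hinner, (hasFDerivAt_inner hΦ η x l).fderiv]
  rw [DFat_apply]
  simp

lemma DFat_mulVec (hΦ : ContDiff ℝ (⊤ : ℕ∞) Φ) (η x : Fin d → ℝ) (u : Fin d → ℝ) :
    DFat Φ η x u = ((mixedHessian d Φ x η)ᵀ).mulVec u := by
  have hlin : (DFat Φ η x : (Fin d → ℝ) →ₗ[ℝ] (Fin d → ℝ)) =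
      ((mixedHessian d Φ x η)ᵀ).mulVecLin := by
    apply Module.Basis.ext (Pi.basisFun ℝ (Fin d))
    intro i
    rw [Pi.basisFun_apply]
    funext l
    rw [Matrix.mulVecLin_apply, Matrix.mulVec_single]
    simp only [MulOpposite.op_one, one_smul, Matrix.col_apply, Matrix.transpose_apply]
    exact (ContinuousLinearMap.coe_coe (DFat Φ η x) ▸ (mixedHessian_eq hΦ x η i l).symm)
  have := LinearMap.ext_iff.1 hlin u
  rw [Matrix.mulVecLin_apply] at this
  exact this

end HadamardAux

end

noncomputable section
namespace HadamardAux

variable {d : ℕ} {Φ : (Fin d → ℝ) × (Fin d → ℝ) → ℝ}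

lemma Hmap_norm_le {C₂ : ℝ} (hC₂ : ∀ p, ‖iteratedFDeriv ℝ 2 Φ p‖ ≤ C₂)
    (p : (Fin d → ℝ) × (Fin d → ℝ)) : ‖Hmap Φ p‖ ≤ C₂ := by
  have h2 : ‖iteratedFDeriv ℝ 0 (fderiv ℝ (fderiv ℝ Φ)) p‖ =
      ‖iteratedFDeriv ℝ 1 (fderiv ℝ Φ) p‖ := norm_iteratedFDeriv_fderiv
  have h3 : ‖iteratedFDeriv ℝ 1 (fderiv ℝ Φ) p‖ = ‖iteratedFDeriv ℝ 2 Φ p‖ :=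
    norm_iteratedFDeriv_fderiv
  have h1 : ‖iteratedFDeriv ℝ 0 (fderiv ℝ (fderiv ℝ Φ)) p‖ = ‖Hmap Φ p‖ :=
    norm_iteratedFDeriv_zero
  rw [← h1, h2, h3]
  exact hC₂ p

lemma Hmap_lip (hΦ : ContDiff ℝ (⊤ : ℕ∞) Φ) {C₃ : ℝ} (hC₃ : ∀ p, ‖iteratedFDeriv ℝ 3 Φ p‖ ≤ C₃)
    (p q : (Fin d → ℝ) × (Fin d → ℝ)) : ‖Hmap Φ p - Hmap Φ q‖ ≤ C₃ * ‖p - q‖ := by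
  have hHsmooth : ContDiff ℝ (⊤ : ℕ∞) (Hmap Φ) :=
    ((hΦ.fderiv_right (m := (⊤ : ℕ∞)) (by simp)).fderiv_right (m := (⊤ : ℕ∞)) (by simp))
  letI i1 : NormedAddCommGroup ((Fin d → ℝ) × (Fin d → ℝ) →L[ℝ]
      (Fin d → ℝ) × (Fin d → ℝ) →L[ℝ] (Fin d → ℝ) × (Fin d → ℝ) →L[ℝ] ℝ) :=
    @ContinuousLinearMap.toNormedAddCommGroup ℝ ℝ ((Fin d → ℝ) × (Fin d → ℝ))
      ((Fin d → ℝ) × (Fin d → ℝ) →L[ℝ] (Fin d → ℝ) × (Fin d → ℝ) →L[ℝ] ℝ) _ _ _ _ _ _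
      (RingHom.id ℝ) _
  letI i2 : NormedSpace ℝ ((Fin d → ℝ) × (Fin d → ℝ) →L[ℝ]
      (Fin d → ℝ) × (Fin d → ℝ) →L[ℝ] (Fin d → ℝ) × (Fin d → ℝ) →L[ℝ] ℝ) :=
    @ContinuousLinearMap.toNormedSpace ℝ ℝ ((Fin d → ℝ) × (Fin d → ℝ))
      ((Fin d → ℝ) × (Fin d → ℝ) →L[ℝ] (Fin d → ℝ) × (Fin d → ℝ) →L[ℝ] ℝ) _ _ _ _ _ _
      (RingHom.id ℝ) _ ℝ _ _ _
  have hbound : ∀ r, ‖fderiv ℝ (Hmap Φ) r‖ ≤ C₃ := by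
    intro r
    have h1 : ‖iteratedFDeriv ℝ 0 (fderiv ℝ (Hmap Φ)) r‖ = ‖fderiv ℝ (Hmap Φ) r‖ :=
      norm_iteratedFDeriv_zero
    have h2 : ‖iteratedFDeriv ℝ 0 (fderiv ℝ (Hmap Φ)) r‖ =
        ‖iteratedFDeriv ℝ 1 (Hmap Φ) r‖ := by rw [h1, norm_iteratedFDeriv_one]
    have h3 : ‖iteratedFDeriv ℝ 1 (fderiv ℝ (fderiv ℝ Φ)) r‖ =
        ‖iteratedFDeriv ℝ 2 (fderiv ℝ Φ) r‖ := norm_iteratedFDeriv_fderiv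
    have h4 : ‖iteratedFDeriv ℝ 2 (fderiv ℝ Φ) r‖ = ‖iteratedFDeriv ℝ 3 Φ r‖ :=
      norm_iteratedFDeriv_fderiv
    rw [← h1, h2]
    show ‖iteratedFDeriv ℝ 1 (fderiv ℝ (fderiv ℝ Φ)) r‖ ≤ C₃
    rw [h3, h4]
    exact hC₃ r
  have := Convex.norm_image_sub_le_of_norm_fderiv_le (𝕜 := ℝ)
    (fun r _ => (hHsmooth.differentiable (by simp) r))
    (fun r _ => hbound r) (convex_univ) (mem_univ q) (mem_univ p)
  simpa using this

lemma norm_single_one (i : Fin d) : ‖(Pi.single i 1 : Fin d → ℝ)‖ = 1 := by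
  rw [Pi.norm_single]
  exact norm_one

lemma mixedHessian_entry_le (hΦ : ContDiff ℝ (⊤ : ℕ∞) Φ) {C₂ : ℝ}
    (hC₂ : ∀ p, ‖iteratedFDeriv ℝ 2 Φ p‖ ≤ C₂) (x η : Fin d → ℝ) (i l : Fin d) :
    |mixedHessian d Φ x η i l| ≤ C₂ := by
  rw [mixedHessian_eq hΦ, DFat_apply]
  have h1 : ‖((Pi.single i 1 : Fin d → ℝ), (0 : Fin d → ℝ))‖ = 1 := by
    rw [Prod.norm_def, norm_single_one, norm_zero]
    simp
  have h2 : ‖((0 : Fin d → ℝ), (Pi.single l 1 : Fin d → ℝ))‖ = 1 := by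
    rw [Prod.norm_def, norm_single_one, norm_zero]
    simp
  calc |Hmap Φ (x, η) (Pi.single i 1, 0) (0, Pi.single l 1)|
      ≤ ‖Hmap Φ (x, η) (Pi.single i 1, 0)‖ * ‖((0 : Fin d → ℝ), (Pi.single l 1 : Fin d → ℝ))‖ :=
        (Hmap Φ (x, η) (Pi.single i 1, 0)).le_opNorm _
    _ ≤ (‖Hmap Φ (x, η)‖ * ‖((Pi.single i 1 : Fin d → ℝ), (0 : Fin d → ℝ))‖) * 1 := by
        rw [h2]
        apply mul_le_mul_of_nonneg_right ((Hmap Φ (x, η)).le_opNorm _) zero_le_one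
    _ ≤ C₂ := by
        rw [h1, mul_one, mul_one]
        exact Hmap_norm_le hC₂ (x, η)

lemma DFat_sub_le (hΦ : ContDiff ℝ (⊤ : ℕ∞) Φ) {C₃ : ℝ}
    (hC₃ : ∀ p, ‖iteratedFDeriv ℝ 3 Φ p‖ ≤ C₃) (η x x' : Fin d → ℝ) :
    ‖DFat Φ η x - DFat Φ η x'‖ ≤ C₃ * ‖x - x'‖ := by
  have hC₃0 : 0 ≤ C₃ := le_trans (norm_nonneg _) (hC₃ 0)
  apply ContinuousLinearMap.opNorm_le_bound _ (by positivity)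
  intro v
  have hcomp : ∀ l, (DFat Φ η x - DFat Φ η x') v l =
      (Hmap Φ (x, η) - Hmap Φ (x', η)) (v, 0) (0, Pi.single l 1) := by
    intro l
    simp only [ContinuousLinearMap.sub_apply, Pi.sub_apply, DFat_apply,
      ContinuousLinearMap.sub_apply]
  rw [show (DFat Φ η x - DFat Φ η x') v = fun l =>
      (Hmap Φ (x, η) - Hmap Φ (x', η)) (v, 0) (0, Pi.single l 1) from funext hcomp]
  apply (pi_norm_le_iff_of_nonneg (by positivity)).2
  intro l
  have h2 : ‖((0 : Fin d → ℝ), (Pi.single l 1 : Fin d → ℝ))‖ = 1 := by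
    rw [Prod.norm_def, norm_single_one, norm_zero]
    simp
  have hv : ‖((v : Fin d → ℝ), (0 : Fin d → ℝ))‖ = ‖v‖ := by
    rw [Prod.norm_def, norm_zero]
    simp [norm_nonneg]
  have hxx : ‖((x, η) : (Fin d → ℝ) × (Fin d → ℝ)) - (x', η)‖ = ‖x - x'‖ := by
    rw [Prod.norm_def]
    simp [norm_nonneg]
  calc ‖(Hmap Φ (x, η) - Hmap Φ (x', η)) (v, 0) (0, Pi.single l 1)‖
      ≤ ‖(Hmap Φ (x, η) - Hmap Φ (x', η)) (v, 0)‖ *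
          ‖((0 : Fin d → ℝ), (Pi.single l 1 : Fin d → ℝ))‖ :=
        ((Hmap Φ (x, η) - Hmap Φ (x', η)) (v, 0)).le_opNorm _
    _ = ‖(Hmap Φ (x, η) - Hmap Φ (x', η)) (v, 0)‖ * 1 := by rw [h2]
    _ ≤ ‖Hmap Φ (x, η) - Hmap Φ (x', η)‖ * ‖v‖ := by
        rw [mul_one, ← hv]
        exact (Hmap Φ (x, η) - Hmap Φ (x', η)).le_opNorm _
    _ ≤ (C₃ * ‖x - x'‖) * ‖v‖ := by
        apply mul_le_mul_of_nonneg_right _ (norm_nonneg v)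
        rw [← hxx]
        exact Hmap_lip hΦ hC₃ (x, η) (x', η)

end HadamardAux
end

noncomputable section
namespace HadamardAux


theorem inv_entry_le {d : ℕ} (A : Matrix (Fin d) (Fin d) ℝ) (δ c : ℝ) (hδ : 0 < δ)
    (hdet : δ ≤ |A.det|) (hc : ∀ i j, |A i j| ≤ c) (i j : Fin d) :
    |A⁻¹ i j| ≤ δ⁻¹ * (Nat.factorial d * (max c 1) ^ d) := by
  have hdet0 : A.det ≠ 0 := by
    intro h0
    rw [h0, abs_zero] at hdet
    linarith
  rw [Matrix.inv_def, Matrix.smul_apply, Ring.inverse_eq_inv, smul_eq_mul, abs_mul, abs_inv]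
  apply mul_le_mul
  · exact (inv_le_inv₀ (lt_of_lt_of_le hδ hdet) hδ).2 hdet
  · rw [Matrix.adjugate_apply]
    apply det_bound _ _ (le_trans zero_le_one (le_max_right c 1))
    intro k l
    rw [Matrix.updateRow_apply]
    by_cases hk : k = j
    · simp only [hk, if_true]
      rw [Pi.single_apply]
      by_cases hl : l = i <;> simp [hl]
    · simp only [hk, if_false]
      exact le_trans (hc k l) (le_max_left c 1)
  · exact abs_nonneg _
  · positivity

end HadamardAux
end

end HadamardPrelim

/-- If `Φ` is smooth with bounded derivatives of order `≥ 2` and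
`|det(∂²Φ/∂x_i∂η_l)| ≥ δ > 0` everywhere, then for each fixed `η` the map
`x ↦ ∇_η Φ(x,η)` is a global diffeomorphism of `ℝ^d`, and the Jacobian
determinant of its inverse is uniformly bounded. -/
theorem hadamard_diffeomorphism (d : ℕ) (hd : 1 ≤ d)
    (Φ : (Fin d → ℝ) × (Fin d → ℝ) → ℝ) (δ : ℝ) (hδ : 0 < δ)
    (hsmooth : ContDiff ℝ (⊤ : ℕ∞) Φ)
    (hbdd : ∀ n : ℕ, 2 ≤ n → ∃ C : ℝ, ∀ p : (Fin d → ℝ) × (Fin d → ℝ),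
      ‖iteratedFDeriv ℝ n Φ p‖ ≤ C)
    (hdet : ∀ x η : Fin d → ℝ, δ ≤ |(mixedHessian d Φ x η).det|) :
    (∀ η : Fin d → ℝ,
      Function.Bijective (fun x => gradEta d Φ x η) ∧
      ∃ Ψ : (Fin d → ℝ) → (Fin d → ℝ),
        ContDiff ℝ (⊤ : ℕ∞) Ψ ∧
        Function.LeftInverse Ψ (fun x => gradEta d Φ x η) ∧
        Function.RightInverse Ψ (fun x => gradEta d Φ x η)) ∧
    ∃ C : ℝ, ∀ x η : Fin d → ℝ, |(mixedHessian d Φ x η).det|⁻¹ ≤ C := by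
  classical
  constructor
  · intro η
    obtain ⟨C₂, hC₂⟩ := hbdd 2 le_rfl
    obtain ⟨C₃, hC₃⟩ := hbdd 3 (by norm_num)
    have hC₂0 : 0 ≤ C₂ := le_trans (norm_nonneg _) (hC₂ 0)
    have hC₃0 : 0 ≤ C₃ := le_trans (norm_nonneg _) (hC₃ 0)
    set c' : ℝ := max C₂ 1 with hc'
    have hc'1 : (1:ℝ) ≤ c' := le_max_right C₂ 1
    have hc'0 : (0:ℝ) < c' := lt_of_lt_of_le zero_lt_one hc'1
    set K : ℝ := d * (δ⁻¹ * (Nat.factorial d * c' ^ d)) with hKdef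
    have hKnn : 0 ≤ K := by positivity
    set N : (Fin d → ℝ) → Matrix (Fin d) (Fin d) ℝ :=
      fun x => (mixedHessian d Φ x η)ᵀ with hNdef
    have hdetN : ∀ x, δ ≤ |(N x).det| := fun x => by
      rw [hNdef, Matrix.det_transpose]
      exact hdet x η
    have hNunit : ∀ x, IsUnit (N x).det := fun x => isUnit_iff_ne_zero.2 (by
      intro h0
      have := hdetN x
      rw [h0, abs_zero] at this
      linarith)
    have hNentry : ∀ x i j, |N x i j| ≤ C₂ := fun x i j => by
      show |(mixedHessian d Φ x η)ᵀ i j| ≤ C₂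
      rw [Matrix.transpose_apply]
      exact HadamardAux.mixedHessian_entry_le hsmooth hC₂ x η j i
    have hNinv_entry : ∀ x i j, |(N x)⁻¹ i j| ≤ δ⁻¹ * (Nat.factorial d * c' ^ d) :=
      fun x i j => HadamardAux.inv_entry_le _ δ C₂ hδ (hdetN x) (hNentry x) i j
    set W : (Fin d → ℝ) → (Fin d → ℝ) →L[ℝ] (Fin d → ℝ) :=
      fun x => LinearMap.toContinuousLinearMap ((N x)⁻¹.mulVecLin) with hWdef
    have hWapp : ∀ x u, W x u = ((N x)⁻¹).mulVec u := fun x u => rfl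
    have hDFapp : ∀ x u, HadamardAux.DFat Φ η x u = (N x).mulVec u := fun x u =>
      HadamardAux.DFat_mulVec hsmooth η x u
    have hWDF : ∀ x u, W x (HadamardAux.DFat Φ η x u) = u := by
      intro x u
      rw [hDFapp, hWapp, Matrix.mulVec_mulVec, Matrix.nonsing_inv_mul _ (hNunit x),
        Matrix.one_mulVec]
    have hDFW : ∀ x u, HadamardAux.DFat Φ η x (W x u) = u := by
      intro x u
      rw [hWapp, hDFapp, Matrix.mulVec_mulVec, Matrix.mul_nonsing_inv _ (hNunit x),
        Matrix.one_mulVec]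
    have hKW : ∀ x, ‖W x‖ ≤ K := by
      intro x
      apply ContinuousLinearMap.opNorm_le_bound _ hKnn
      intro v
      rw [hWapp]
      calc ‖((N x)⁻¹).mulVec v‖ ≤ ((d:ℝ) * (δ⁻¹ * (Nat.factorial d * c' ^ d))) * ‖v‖ :=
            mulVec_norm_le _ _ (by positivity) (hNinv_entry x) v
        _ = K * ‖v‖ := by rw [hKdef]
    have hLipW : ∀ x x', ‖W x - W x'‖ ≤ (K * K * C₃) * ‖x - x'‖ := by
      intro x x'
      have hid : W x - W x' = (W x).comp
          ((HadamardAux.DFat Φ η x' - HadamardAux.DFat Φ η x).comp (W x')) := by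
        apply ContinuousLinearMap.ext
        intro u
        simp only [ContinuousLinearMap.sub_apply, ContinuousLinearMap.comp_apply, map_sub]
        rw [hDFW x' u, hWDF x (W x' u)]
      rw [hid]
      calc ‖(W x).comp ((HadamardAux.DFat Φ η x' - HadamardAux.DFat Φ η x).comp (W x'))‖
          ≤ ‖W x‖ * ‖(HadamardAux.DFat Φ η x' - HadamardAux.DFat Φ η x).comp (W x')‖ :=
            ContinuousLinearMap.opNorm_comp_le _ _
        _ ≤ ‖W x‖ * (‖HadamardAux.DFat Φ η x' - HadamardAux.DFat Φ η x‖ * ‖W x'‖) := by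
            apply mul_le_mul_of_nonneg_left (ContinuousLinearMap.opNorm_comp_le _ _)
              (norm_nonneg _)
        _ ≤ K * ((C₃ * ‖x' - x‖) * K) := by
            apply mul_le_mul (hKW x) _ (by positivity) hKnn
            apply mul_le_mul (HadamardAux.DFat_sub_le hsmooth hC₃ η x' x) (hKW x')
              (norm_nonneg _) (by positivity)
        _ = (K * K * C₃) * ‖x - x'‖ := by
            rw [norm_sub_rev]
            ring
    have hFsmooth : ContDiff ℝ (⊤ : ℕ∞) (fun x => gradEta d Φ x η) := by
      have heq : (fun x => gradEta d Φ x η) =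
          fun x => (fun l => fderiv ℝ Φ (x, η) (0, Pi.single l 1)) :=
        funext fun x => HadamardAux.gradEta_eq hsmooth x η
      rw [heq]
      apply contDiff_pi.2
      intro l
      exact (ContinuousLinearMap.apply ℝ ℝ
          ((0, Pi.single l 1) : (Fin d → ℝ) × (Fin d → ℝ))).contDiff.comp
        ((hsmooth.fderiv_right (by simp)).comp (contDiff_id.prodMk contDiff_const))
    exact hadamard_core (fun x => gradEta d Φ x η) (HadamardAux.DFat Φ η) W K (K * K * C₃)
      (by positivity) hFsmooth (fun x => HadamardAux.hasFDerivAt_gradEta hsmooth η x)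
      hWDF hDFW hKW hLipW
  · exact ⟨δ⁻¹, fun x η =>
      (inv_le_inv₀ (lt_of_lt_of_le hδ (hdet x η)) hδ).2 (hdet x η)⟩

end
end
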